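/- arXiv:2408.15144 — 7 statements merged into one kernel-verified Lean document; each statement's English description precedes it below -/
import Mathlib

section
/- Let n ≥ 2 be an integer. There exists a family 𝒜 of subsets of [n]² with |𝒜| = 2^{n²-1} (half of all subsets) such that no two A, B ∈ 𝒜 satisfy A Δ B = I² for a non-empty interval I ⊆ [n]. -/
/-!
Let `D ⊆ [n]²` be the diagonal together with the superdiagonal `{(i, i + 1)}`. For a non-empty
interval `I`, the set `I² ∩ D` has `|I| + (|I| - 1)` elements, an odd number, whereas if `A` and
`B` both meet `D` in an even number of points then so does `A Δ B`. The sets meeting `D` evenly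
are exactly half of all subsets of `[n]²`, because toggling a fixed point of `D` is an involution
that reverses this parity.
-/

open Finset
open scoped symmDiff

variable {α : Type*}

section Parity

variable [DecidableEq α]

theorem Finset.card_symmDiff_add_two_mul_card_inter (s t : Finset α) :
    #(s ∆ t) + 2 * #(s ∩ t) = #s + #t := by
  rw [Finset.symmDiff_def, card_union_of_disjoint disjoint_sdiff_sdiff]
  have hs := card_sdiff_add_card_inter s t
  have ht := card_sdiff_add_card_inter t s
  rw [inter_comm] at ht
  omega

theorem Finset.even_card_symmDiff_iff (s t : Finset α) :
    Even #(s ∆ t) ↔ (Even #s ↔ Even #t) := by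
  rw [← Nat.even_add, ← card_symmDiff_add_two_mul_card_inter, Nat.even_add]
  simp

theorem Finset.even_card_symmDiff_inter_iff (A B D : Finset α) :
    Even #((A ∆ B) ∩ D) ↔ (Even #(A ∩ D) ↔ Even #(B ∩ D)) := by
  rw [show (A ∆ B) ∩ D = (A ∩ D) ∆ (B ∩ D) from inf_symmDiff_distrib_right A B D,
    even_card_symmDiff_iff]

variable [Fintype α]

def evenInter (D : Finset α) : Finset (Finset α) :=
  univ.filter fun A => Even #(A ∩ D)

theorem even_card_symmDiff_inter_of_mem_evenInter {A B D : Finset α}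
    (hA : A ∈ evenInter D) (hB : B ∈ evenInter D) : Even #((A ∆ B) ∩ D) := by
  simp only [evenInter, mem_filter, mem_univ, true_and] at hA hB
  exact (even_card_symmDiff_inter_iff A B D).2 (iff_of_true hA hB)

theorem card_evenInter {D : Finset α} (hD : D.Nonempty) :
    #(evenInter D) = 2 ^ (Fintype.card α - 1) := by
  obtain ⟨x, hx⟩ := hD
  have hflip (A : Finset α) : Even #((A ∆ {x}) ∩ D) ↔ ¬Even #(A ∩ D) := by
    rw [even_card_symmDiff_inter_iff, singleton_inter_of_mem hx, card_singleton]
    simp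
  have hhalf : #(evenInter D) = #(univ.filter fun A : Finset α => ¬Even #(A ∩ D)) := by
    refine card_nbij' (· ∆ {x}) (· ∆ {x}) ?_ ?_ ?_ ?_ <;> intro A _
    all_goals simp_all [evenInter, -Nat.not_even_iff_odd]
  have htotal := card_filter_add_card_filter_not (s := (univ : Finset (Finset α)))
    (fun A => Even #(A ∩ D))
  rw [card_univ, Fintype.card_finset, ← evenInter, ← hhalf] at htotal
  obtain ⟨m, hm⟩ := Nat.exists_eq_add_one.2 (Fintype.card_pos_iff.2 ⟨x⟩)
  rw [hm, pow_succ] at htotal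
  rw [hm, Nat.add_sub_cancel]
  omega

end Parity

section Interval

variable [LinearOrder α] [LocallyFiniteOrder α] [DecidableRel ((· ⋖ ·) : α → α → Prop)]

theorem card_filter_covBy_Icc_product_Icc (a b : α) :
    #((Icc a b ×ˢ Icc a b).filter fun p => p.1 ⋖ p.2) = #(Ico a b) := by
  refine card_nbij Prod.fst ?_ ?_ ?_
  · rintro ⟨i, j⟩ h
    simp only [mem_coe, mem_filter, mem_product, mem_Icc, mem_Ico] at h ⊢
    exact ⟨h.1.1.1, h.2.lt.trans_le h.1.2.2⟩
  · rintro ⟨i, j⟩ h ⟨i', j'⟩ h' (rfl : i = i')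
    simp only [mem_coe, mem_filter] at h h'
    rw [h.2.unique_right h'.2]
  · intro i hi
    simp only [mem_coe, mem_Ico] at hi
    obtain ⟨j, hij, hjb⟩ := exists_covBy_le_of_lt hi.2
    exact ⟨(i, j), by simp [hi.1, hjb, hij, hi.2.le, hi.1.trans hij.le], rfl⟩

theorem odd_card_filter_eq_or_covBy_Icc_product_Icc {a b : α} (hab : a ≤ b) :
    Odd #((Icc a b ×ˢ Icc a b).filter fun p => p.1 = p.2 ∨ p.1 ⋖ p.2) := by
  rw [filter_or, card_union_of_disjoint, ← diag_eq_filter, diag_card,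
    card_filter_covBy_Icc_product_Icc, ← Ico_insert_right hab,
    card_insert_of_notMem right_notMem_Ico]
  · exact ⟨#(Ico a b), by ring⟩
  · exact disjoint_filter.2 fun p _ h hcov => hcov.ne h

end Interval

/-- There is a family of half of all subsets of `[n]²` no two members of which
    have symmetric difference equal to `I²` for a non-empty interval `I ⊆ [n]`. -/
theorem stmt_4 (n : ℕ) (hn : 2 ≤ n) :
    ∃ 𝒜 : Finset (Finset (Fin n × Fin n)),
      𝒜.card = 2 ^ (n ^ 2 - 1) ∧
      ∀ A ∈ 𝒜, ∀ B ∈ 𝒜, ∀ a b : Fin n, a ≤ b →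
        symmDiff A B ≠ Finset.Icc a b ×ˢ Finset.Icc a b := by
  classical
  let D : Finset (Fin n × Fin n) := univ.filter fun p => p.1 = p.2 ∨ p.1 ⋖ p.2
  have hD : D.Nonempty := ⟨(⟨0, by omega⟩, ⟨0, by omega⟩), by simp [D]⟩
  refine ⟨evenInter D, ?_, fun A hA B hB a b hab hAB => ?_⟩
  · rw [card_evenInter hD, Fintype.card_prod, Fintype.card_fin, sq]
  · have heven := even_card_symmDiff_inter_of_mem_evenInter hA hB
    rw [hAB, inter_filter, inter_univ] at heven
    exact Nat.not_even_iff_odd.2 (odd_card_filter_eq_or_covBy_Icc_product_Icc hab) heven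
end

section
/- For all integers n ≥ d ≥ 2, there exists a family 𝒜 of subsets of [n]^d with |𝒜| = 2^{n^d - 1} such that no pair A, B ∈ 𝒜 satisfies A Δ B = S^d for some non-empty set S ⊆ [n] that can be written as a union of at most ⌊d/2⌋ intervals. -/
open Finset
open scoped Classical

namespace Stmt5
variable {n d : ℕ}

noncomputable section

def coF [NeZero d] (x : Fin d → Fin n) (m : ℕ) : Fin n :=
  x ⟨m % d, Nat.mod_lt _ (NeZero.pos d)⟩

def co [NeZero d] (x : Fin d → Fin n) (m : ℕ) : ℕ := (coF x m).val

lemma coF_eq [NeZero d] (x : Fin d → Fin n) {m : ℕ} (h : m < d) : coF x m = x ⟨m, h⟩ := by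
  unfold coF; congr 1; exact Fin.ext (Nat.mod_eq_of_lt h)

lemma coF_fin [NeZero d] (x : Fin d → Fin n) (m : Fin d) : coF x m.val = x m := by
  rw [coF_eq x m.isLt]

lemma co_fin [NeZero d] (x : Fin d → Fin n) (m : Fin d) : co x m.val = (x m).val := by
  unfold co; rw [coF_fin]

lemma co_zero [NeZero d] (x : Fin d → Fin n) : co x 0 = (x 0).val := by
  have : ((0 : Fin d) : ℕ) = 0 := rfl
  rw [← this, co_fin]

def pat [NeZero d] (j : ℕ) (x : Fin d → Fin n) : Prop :=
  (∀ i1 i2 : ℕ, i1 < i2 → i2 < j → co x (2*i1) < co x (2*i2)) ∧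
  (∀ i < j, co x (2*i+1) = co x (2*i) ∨ co x (2*i+1) = co x (2*i) + 1) ∧
  (∀ m, 2*j ≤ m → m < d → co x m = co x 0)

def wt [NeZero d] (x : Fin d → Fin n) : ZMod 2 :=
  if ∃ j, 1 ≤ j ∧ j ≤ d/2 ∧ pat j x then 1 else 0

lemma wt_eq_zero_or_one [NeZero d] (x : Fin d → Fin n) : wt x = 0 ∨ wt x = 1 := by
  unfold wt; split <;> simp

lemma pat_unique [NeZero d] {x : Fin d → Fin n} {j j' : ℕ} (h : pat j x) (h' : pat j' x)
    (hj : 1 ≤ j) (hj' : 1 ≤ j') (hk : j ≤ d/2) (hk' : j' ≤ d/2) : j = j' := by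
  by_contra hne
  rcases Nat.lt_or_ge j j' with hlt | hge
  · have hpin := h.2.2 (2*j) le_rfl (by omega)
    have hch := h'.1 0 j hj hlt
    simp only [Nat.mul_zero] at hch
    omega
  · have hlt : j' < j := by omega
    have hpin := h'.2.2 (2*j') le_rfl (by omega)
    have hch := h.1 0 j' hj' hlt
    simp only [Nat.mul_zero] at hch
    omega

def jof [NeZero d] (x : Fin d → Fin n) : ℕ :=
  if h : ∃ j, 1 ≤ j ∧ j ≤ d/2 ∧ pat j x then h.choose else 0

lemma jof_spec [NeZero d] {x : Fin d → Fin n} (hw : wt x = 1) :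
    1 ≤ jof x ∧ jof x ≤ d/2 ∧ pat (jof x) x := by
  unfold wt at hw
  split at hw
  · next h =>
    unfold jof
    rw [dif_pos h]
    exact h.choose_spec
  · exact absurd hw (by decide)

lemma jof_eq [NeZero d] {x : Fin d → Fin n} {j : ℕ} (hp : pat j x) (h1 : 1 ≤ j)
    (h2 : j ≤ d/2) : jof x = j := by
  have hw : wt x = 1 := by unfold wt; rw [if_pos ⟨j, h1, h2, hp⟩]
  obtain ⟨a, b, c⟩ := jof_spec hw
  exact pat_unique c hp a h1 b h2

lemma wt_of_pat [NeZero d] {x : Fin d → Fin n} {j : ℕ} (hp : pat j x) (h1 : 1 ≤ j)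
    (h2 : j ≤ d/2) : wt x = 1 := by
  unfold wt; rw [if_pos ⟨j, h1, h2, hp⟩]

lemma co_const [NeZero d] (v : Fin n) (m : ℕ) : co (fun _ : Fin d => v) m = v.val := rfl

lemma pat_const [NeZero d] (v : Fin n) : pat 1 (fun _ : Fin d => v) := by
  refine ⟨?_, ?_, ?_⟩
  · intro i1 i2 h1 h2; omega
  · intro i hi; left; rfl
  · intro m _ _; rfl

lemma wt_const [NeZero d] (hd : 1 ≤ d/2) (v : Fin n) : wt (fun _ : Fin d => v) = 1 :=
  wt_of_pat (pat_const v) le_rfl hd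

lemma jof_const [NeZero d] (hd : 1 ≤ d/2) (v : Fin n) : jof (fun _ : Fin d => v) = 1 :=
  jof_eq (pat_const v) le_rfl hd


def ES (S : Finset (Fin n)) : Finset (Fin n) :=
  S.filter (fun e => ¬ ∃ s ∈ S, (s : ℕ) = (e : ℕ) + 1)

def CAset [NeZero d] (S : Finset (Fin n)) (x : Fin d → Fin n) : Set ℕ :=
  {i | i < jof x ∧ ∃ s ∈ S, (s : ℕ) = co x (2*i) + 1}

def i0 [NeZero d] (S : Finset (Fin n)) (x : Fin d → Fin n) : ℕ := sInf (CAset S x)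

def sig [NeZero d] (S : Finset (Fin n)) (hS : S.Nonempty) (x : Fin d → Fin n) :
    Fin d → Fin n :=
  if _hw : wt x = 1 then
    if hA : (CAset S x).Nonempty then
      fun m => if (m : ℕ) = 2*(i0 S x)+1 then
        (if co x (2*(i0 S x)+1) = co x (2*(i0 S x))
         then ((Nat.sInf_mem hA).2).choose
         else coF x (2*(i0 S x)))
      else x m
    else if co x (2*(jof x - 1)) = (S.max' hS : ℕ) then
      fun m => if (m : ℕ) = 2*(jof x - 1) ∨ (m : ℕ) = 2*(jof x - 1)+1 then x 0 else x m
    else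
      fun m => if (m : ℕ) = 2*(jof x) ∨ (m : ℕ) = 2*(jof x)+1 then S.max' hS else x m
  else x


lemma co_apply [NeZero d] (f : Fin d → Fin n) {t : ℕ} (ht : t < d) :
    co f t = (f ⟨t, ht⟩).val := by unfold co; rw [coF_eq f ht]

lemma coF_mem [NeZero d] {S : Finset (Fin n)} {x : Fin d → Fin n}
    (hx : ∀ m : Fin d, x m ∈ S) (t : ℕ) : coF x t ∈ S := hx _

lemma sigA [NeZero d] {S : Finset (Fin n)} (hS : S.Nonempty) {x : Fin d → Fin n}
    (hx : ∀ m : Fin d, x m ∈ S) (hw : wt x = 1) (hA : (CAset S x).Nonempty) :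
    (∀ m, sig S hS x m ∈ S) ∧ wt (sig S hS x) = 1 ∧ sig S hS x ≠ x ∧
    sig S hS x ≠ (fun _ => S.max' hS) ∧ sig S hS (sig S hS x) = x := by
  obtain ⟨hj1, hjk, hcn, hdec, hpin⟩ := jof_spec hw
  have hm := Nat.sInf_mem hA
  have hi : i0 S x < jof x := hm.1
  have hex : ∃ s ∈ S, (s : ℕ) = co x (2*(i0 S x)) + 1 := hm.2
  have huS : ((Nat.sInf_mem hA).2).choose ∈ S := ((Nat.sInf_mem hA).2).choose_spec.1
  have huv : (((Nat.sInf_mem hA).2).choose : ℕ) = co x (2*(i0 S x)) + 1 :=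
    ((Nat.sInf_mem hA).2).choose_spec.2
  have hd1 : 2*(i0 S x)+1 < d := by omega
  have hy : sig S hS x = fun m : Fin d => if (m : ℕ) = 2*(i0 S x)+1 then
      (if co x (2*(i0 S x)+1) = co x (2*(i0 S x))
       then ((Nat.sInf_mem hA).2).choose
       else coF x (2*(i0 S x)))
      else x m := by
    unfold sig; rw [dif_pos hw, dif_pos hA]
  set y := sig S hS x with hydef
  have hYother : ∀ m : Fin d, (m:ℕ) ≠ 2*(i0 S x)+1 → y m = x m := by
    intro m hm'; rw [hy]; exact if_neg hm'
  have hYco : ∀ t, t < d → t ≠ 2*(i0 S x)+1 → co y t = co x t := by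
    intro t ht hne
    rw [co_apply y ht, co_apply x ht, hYother ⟨t, ht⟩ hne]
  have hYcoAt : co y (2*(i0 S x)+1) =
      if co x (2*(i0 S x)+1) = co x (2*(i0 S x)) then co x (2*(i0 S x))+1
      else co x (2*(i0 S x)) := by
    rw [co_apply y hd1, hy]
    simp only []
    rw [if_pos trivial]
    split
    · exact huv
    · rfl
  have hmem : ∀ m, y m ∈ S := by
    intro m
    rw [hy]
    dsimp only
    split
    · split
      · exact huS
      · exact coF_mem hx _
    · exact hx m
  have hpaty : pat (jof x) y := by
    refine ⟨?_, ?_, ?_⟩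
    · intro i1 i2 h1 h2
      rw [hYco (2*i1) (by omega) (by omega), hYco (2*i2) (by omega) (by omega)]
      exact hcn i1 i2 h1 h2
    · intro i hij
      rcases eq_or_ne i (i0 S x) with rfl | hne
      · rw [hYcoAt, hYco (2*(i0 S x)) (by omega) (by omega)]
        split
        · right; rfl
        · left; rfl
      · rw [hYco (2*i+1) (by omega) (by omega), hYco (2*i) (by omega) (by omega)]
        exact hdec i hij
    · intro m h2j hmd
      rw [hYco m hmd (by omega), hYco 0 (by omega) (by omega)]
      exact hpin m h2j hmd
  have hwy : wt y = 1 := wt_of_pat hpaty hj1 hjk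
  have hjy : jof y = jof x := jof_eq hpaty hj1 hjk
  have hcoeven : ∀ i, i < jof x → co y (2*i) = co x (2*i) := by
    intro i hij; exact hYco (2*i) (by omega) (by omega)
  have hCA : CAset S y = CAset S x := by
    apply Set.ext; intro i
    simp only [CAset, Set.mem_setOf_eq, hjy]
    constructor
    · rintro ⟨h1, s, hs1, hs2⟩
      exact ⟨h1, s, hs1, by rw [hcoeven i h1] at hs2; exact hs2⟩
    · rintro ⟨h1, s, hs1, hs2⟩
      exact ⟨h1, s, hs1, by rw [hcoeven i h1]; exact hs2⟩
  have hAy : (CAset S y).Nonempty := by rw [hCA]; exact hA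
  have hiy : i0 S y = i0 S x := by unfold i0; rw [hCA]
  have hne_x : y ≠ x := by
    intro heq
    have : co y (2*(i0 S x)+1) = co x (2*(i0 S x)+1) := by rw [heq]
    rw [hYcoAt] at this
    rcases hdec (i0 S x) hi with h | h <;> split at this <;> omega
  have hne_M : y ≠ (fun _ => S.max' hS) := by
    intro heq
    have h1 : co y (2*(i0 S x)) = (S.max' hS : ℕ) := by
      rw [co_apply y (show 2*(i0 S x) < d by omega)]
      exact congrArg Fin.val (congrFun heq _)
    rw [hcoeven _ hi] at h1
    obtain ⟨s, hs1, hs2⟩ := hex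
    have := S.le_max' s hs1
    rw [Fin.le_def] at this
    omega
  refine ⟨hmem, hwy, hne_x, hne_M, ?_⟩
  have hyy : sig S hS y = fun m : Fin d => if (m : ℕ) = 2*(i0 S y)+1 then
      (if co y (2*(i0 S y)+1) = co y (2*(i0 S y))
       then ((Nat.sInf_mem hAy).2).choose
       else coF y (2*(i0 S y)))
      else y m := by
    unfold sig; rw [dif_pos hwy, dif_pos hAy]
  rw [hyy]
  funext m
  rw [hiy]
  rcases eq_or_ne (m : ℕ) (2*(i0 S x)+1) with hmeq | hmne
  · rw [if_pos hmeq]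
    have hmfin : m = ⟨2*(i0 S x)+1, hd1⟩ := Fin.ext hmeq
    have hxm : (x m).val = co x (2*(i0 S x)+1) := by
      rw [co_apply x hd1, hmfin]
    rcases hdec (i0 S x) hi with hc | hc
    · -- c was b; y's value is b+1; toggle back to coF y (2 i0) = b
      have hcy : co y (2*(i0 S x)+1) = co x (2*(i0 S x)) + 1 := by rw [hYcoAt, if_pos hc]
      rw [if_neg (show ¬ (co y (2*(i0 S x)+1) = co y (2*(i0 S x))) by
        rw [hcy, hcoeven _ hi]; omega)]
      have : coF y (2*(i0 S x)) = coF x (2*(i0 S x)) := by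
        rw [coF_eq y (show 2*(i0 S x) < d by omega), coF_eq x (show 2*(i0 S x) < d by omega)]
        exact hYother ⟨2*(i0 S x), by omega⟩ (by show 2*(i0 S x) ≠ 2*(i0 S x)+1; omega)
      rw [this]
      exact Fin.ext (by rw [hxm, hc]; rfl)
    · -- c was b+1; y's value is b; toggle forward via choose
      have hcc : ¬ (co x (2*(i0 S x)+1) = co x (2*(i0 S x))) := by omega
      have hcy : co y (2*(i0 S x)+1) = co x (2*(i0 S x)) := by rw [hYcoAt, if_neg hcc]
      rw [if_pos (show co y (2*(i0 S x)+1) = co y (2*(i0 S x)) by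
        rw [hcy, hcoeven _ hi])]
      have hv : (((Nat.sInf_mem hAy).2).choose : ℕ) = co y (2*(i0 S y)) + 1 :=
        ((Nat.sInf_mem hAy).2).choose_spec.2
      refine Fin.ext ?_
      rw [hv, hiy, hcoeven _ hi, hxm, hc]
  · rw [if_neg hmne]
    exact hYother m hmne


lemma val_le_max {S : Finset (Fin n)} (hS : S.Nonempty) {s : Fin n} (hs : s ∈ S) :
    (s : ℕ) ≤ (S.max' hS : ℕ) := S.le_max' s hs

lemma mem_ES_iff {S : Finset (Fin n)} {e : Fin n} :
    e ∈ ES S ↔ e ∈ S ∧ ¬ ∃ s ∈ S, (s : ℕ) = (e : ℕ) + 1 := Finset.mem_filter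

lemma max_mem_ES {S : Finset (Fin n)} (hS : S.Nonempty) : S.max' hS ∈ ES S := by
  rw [mem_ES_iff]
  refine ⟨S.max'_mem hS, ?_⟩
  rintro ⟨s, hs1, hs2⟩
  have := val_le_max hS hs1
  omega

lemma sigB [NeZero d] {S : Finset (Fin n)} (hS : S.Nonempty) {x : Fin d → Fin n}
    (hx : ∀ m : Fin d, x m ∈ S) (hw : wt x = 1) (hnA : ¬ (CAset S x).Nonempty)
    (hxne : x ≠ (fun _ => S.max' hS)) (hE : (ES S).card ≤ d/2) :
    (∀ m, sig S hS x m ∈ S) ∧ wt (sig S hS x) = 1 ∧ sig S hS x ≠ x ∧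
    sig S hS x ≠ (fun _ => S.max' hS) ∧ sig S hS (sig S hS x) = x := by
  obtain ⟨hj1, hjk, hcn, hdec, hpin⟩ := jof_spec hw
  have hno : ∀ i, i < jof x → ¬ ∃ s ∈ S, (s : ℕ) = co x (2*i) + 1 := by
    intro i hi hex; exact hnA ⟨i, hi, hex⟩
  have hxval : ∀ (m : Fin d) (t : ℕ) (_ : (m:ℕ) = t), (x m).val = co x t := by
    intro m t ht; rw [← ht, co_fin]
  by_cases hM : co x (2*(jof x - 1)) = (S.max' hS : ℕ)
  · -- removal case
    have j2 : 2 ≤ jof x := by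
      by_contra hj2
      have hj : jof x = 1 := by omega
      apply hxne
      funext m
      refine Fin.ext ?_
      have hv : (x m).val = co x (m : ℕ) := (hxval m _ rfl)
      have hMv : (S.max' hS : ℕ) = co x 0 := by rw [← hM, hj]
      rcases Nat.lt_or_ge (m : ℕ) 2 with h2 | h2
      · rcases Nat.lt_or_ge (m : ℕ) 1 with h1 | h1
        · have : (m : ℕ) = 0 := by omega
          rw [hv, this, hMv]
        · have hm1 : (m : ℕ) = 1 := by omega
          have := hdec 0 (by omega)
          simp only [Nat.mul_zero, Nat.zero_add] at this
          have hle : (x m).val ≤ (S.max' hS : ℕ) := val_le_max hS (hx m)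
          rw [hv, hm1] at *
          omega
      · rw [hv, hpin (m:ℕ) (by omega) m.isLt, hMv]
    have hp1d : 2*(jof x - 1)+1 < d := by omega
    have hy : sig S hS x = fun m : Fin d =>
        if (m : ℕ) = 2*(jof x - 1) ∨ (m : ℕ) = 2*(jof x - 1)+1 then x 0 else x m := by
      unfold sig; rw [dif_pos hw, dif_neg hnA, if_pos hM]
    set y := sig S hS x with hydef
    have hYother : ∀ m : Fin d, ((m:ℕ) = 2*(jof x - 1) ∨ (m:ℕ) = 2*(jof x - 1)+1) = False →
        y m = x m := by
      intro m hm'; rw [hy]; simp only [hm', if_false]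
    have hYo : ∀ t, t < d → t ≠ 2*(jof x - 1) → t ≠ 2*(jof x - 1)+1 → co y t = co x t := by
      intro t ht h1 h2
      rw [co_apply y ht, co_apply x ht, hYother ⟨t, ht⟩ (by simp [h1, h2])]
    have hYp : ∀ t, t < d → (t = 2*(jof x - 1) ∨ t = 2*(jof x - 1)+1) → co y t = co x 0 := by
      intro t ht hor
      rw [co_apply y ht, hy]
      simp only []
      rw [if_pos hor, ← co_zero]
    have hb0 : co x 0 < co x (2*(jof x - 1)) := by
      have := hcn 0 (jof x - 1) (by omega) (by omega)
      simpa using this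
    have hmem : ∀ m, y m ∈ S := by
      intro m
      rw [hy]
      dsimp only
      split
      · exact hx 0
      · exact hx m
    have hco0 : co y 0 = co x 0 := hYo 0 (by omega) (by omega) (by omega)
    have hpaty : pat (jof x - 1) y := by
      refine ⟨?_, ?_, ?_⟩
      · intro i1 i2 h1 h2
        rw [hYo (2*i1) (by omega) (by omega) (by omega),
            hYo (2*i2) (by omega) (by omega) (by omega)]
        exact hcn i1 i2 h1 (by omega)
      · intro i hij
        rw [hYo (2*i+1) (by omega) (by omega) (by omega),
            hYo (2*i) (by omega) (by omega) (by omega)]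
        exact hdec i (by omega)
      · intro m h2j hmd
        rw [hco0]
        rcases Nat.lt_or_ge m (2*(jof x)) with hlt | hge
        · exact hYp m hmd (by omega)
        · rw [hYo m hmd (by omega) (by omega)]
          exact hpin m (by omega) hmd
    have hwy : wt y = 1 := wt_of_pat hpaty (by omega) (by omega)
    have hjy : jof y = jof x - 1 := jof_eq hpaty (by omega) (by omega)
    have hne_x : y ≠ x := by
      intro heq
      have : co y (2*(jof x - 1)) = co x (2*(jof x - 1)) := by rw [heq]
      rw [hYp _ (by omega) (by omega)] at this
      omega
    have hne_M : y ≠ (fun _ => S.max' hS) := by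
      intro heq
      have h1 : co y 0 = (S.max' hS : ℕ) := by
        rw [co_apply y (by omega : (0:ℕ) < d)]
        exact congrArg Fin.val (congrFun heq _)
      rw [hco0] at h1
      omega
    refine ⟨hmem, hwy, hne_x, hne_M, ?_⟩
    -- sig y : add branch
    have hnoy : ¬ (CAset S y).Nonempty := by
      rintro ⟨i, hi1, hex⟩
      rw [hjy] at hi1
      rw [hYo (2*i) (by omega) (by omega) (by omega)] at hex
      exact hno i (by omega) hex
    have hMy : ¬ (co y (2*(jof y - 1)) = (S.max' hS : ℕ)) := by
      rw [hjy]
      rw [hYo (2*(jof x - 1 - 1)) (by omega) (by omega) (by omega)]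
      have hlt : co x (2*(jof x - 1 - 1)) < co x (2*(jof x - 1)) :=
        hcn _ _ (by omega) (by omega)
      omega
    have hyy : sig S hS y = fun m : Fin d =>
        if (m : ℕ) = 2*(jof y) ∨ (m : ℕ) = 2*(jof y)+1 then S.max' hS else y m := by
      unfold sig; rw [dif_pos hwy, dif_neg hnoy, if_neg hMy]
    rw [hyy]
    funext m
    rw [hjy]
    rcases eq_or_ne (m : ℕ) (2*(jof x - 1)) with hmeq | hmne1
    · rw [if_pos (by omega : (m:ℕ) = 2*(jof x - 1) ∨ (m:ℕ) = 2*(jof x - 1)+1)]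
      refine Fin.ext ?_
      rw [hxval m _ hmeq, hM]
    · rcases eq_or_ne (m : ℕ) (2*(jof x - 1)+1) with hmeq2 | hmne2
      · rw [if_pos (by omega : (m:ℕ) = 2*(jof x - 1) ∨ (m:ℕ) = 2*(jof x - 1)+1)]
        refine Fin.ext ?_
        rw [hxval m _ hmeq2]
        have := hdec (jof x - 1) (by omega)
        have hle : (x m).val ≤ (S.max' hS : ℕ) := val_le_max hS (hx m)
        rw [hxval m _ hmeq2] at hle
        omega
      · rw [if_neg (by omega : ¬ ((m:ℕ) = 2*(jof x - 1) ∨ (m:ℕ) = 2*(jof x - 1)+1))]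
        exact hYother m (by simp [hmne1, hmne2])
  · -- addition case
    have hlast_le : co x (2*(jof x - 1)) ≤ (S.max' hS : ℕ) := by
      have : (coF x (2*(jof x - 1))).val ≤ (S.max' hS : ℕ) := val_le_max hS (coF_mem hx _)
      exact this
    have hall_lt : ∀ i, i < jof x → co x (2*i) < (S.max' hS : ℕ) := by
      intro i hi
      rcases eq_or_ne i (jof x - 1) with rfl | hne
      · omega
      · have := hcn i (jof x - 1) (by omega) (by omega)
        omega
    have hjlt : jof x + 1 ≤ d / 2 := by
      have hmap : ∀ a ∈ Finset.range (jof x), coF x (2*a) ∈ (ES S).erase (S.max' hS) := by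
        intro a ha
        rw [Finset.mem_range] at ha
        rw [Finset.mem_erase, mem_ES_iff]
        refine ⟨?_, coF_mem hx _, ?_⟩
        · intro heq
          have := hall_lt a ha
          rw [← heq] at this
          exact absurd rfl (Nat.ne_of_lt this)
        · exact hno a ha
      have hinj : Set.InjOn (fun a => coF x (2*a)) (Finset.range (jof x)) := by
        intro a1 h1 a2 h2 heq
        rw [Finset.coe_range, Set.mem_Iio] at h1 h2
        by_contra hne
        have hv : (coF x (2*a1)).val = (coF x (2*a2)).val := congrArg Fin.val heq
        rcases Nat.lt_or_ge a1 a2 with hlt | hge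
        · have := hcn a1 a2 hlt h2
          unfold co at this
          omega
        · have := hcn a2 a1 (by omega) h1
          unfold co at this
          omega
      have hcard := Finset.card_le_card_of_injOn _ hmap hinj
      rw [Finset.card_range, Finset.card_erase_of_mem (max_mem_ES hS)] at hcard
      have hpos : 0 < (ES S).card := Finset.card_pos.mpr ⟨_, max_mem_ES hS⟩
      omega
    have hp1d : 2*(jof x)+1 < d := by omega
    have hy : sig S hS x = fun m : Fin d =>
        if (m : ℕ) = 2*(jof x) ∨ (m : ℕ) = 2*(jof x)+1 then S.max' hS else x m := by
      unfold sig; rw [dif_pos hw, dif_neg hnA, if_neg hM]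
    set y := sig S hS x with hydef
    have hYother : ∀ m : Fin d, ((m:ℕ) = 2*(jof x) ∨ (m:ℕ) = 2*(jof x)+1) = False →
        y m = x m := by
      intro m hm'; rw [hy]; simp only [hm', if_false]
    have hYo : ∀ t, t < d → t ≠ 2*(jof x) → t ≠ 2*(jof x)+1 → co y t = co x t := by
      intro t ht h1 h2
      rw [co_apply y ht, co_apply x ht, hYother ⟨t, ht⟩ (by simp [h1, h2])]
    have hYp : ∀ t, t < d → (t = 2*(jof x) ∨ t = 2*(jof x)+1) → co y t = (S.max' hS : ℕ) := by
      intro t ht hor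
      rw [co_apply y ht, hy]
      simp only []
      rw [if_pos hor]
    have hmem : ∀ m, y m ∈ S := by
      intro m
      rw [hy]
      dsimp only
      split
      · exact S.max'_mem hS
      · exact hx m
    have hco0 : co y 0 = co x 0 := hYo 0 (by omega) (by omega) (by omega)
    have hco00 : co x 0 ≤ co x (2*(jof x - 1)) := by
      rcases eq_or_ne (jof x) 1 with h1 | h1
      · have : (2 : ℕ)*(jof x - 1) = 2*0 := by rw [h1]
        rw [this]
      · have := hcn 0 (jof x - 1) (by omega) (by omega)
        simp only [Nat.mul_zero] at this
        omega
    have hpaty : pat (jof x + 1) y := by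
      refine ⟨?_, ?_, ?_⟩
      · intro i1 i2 h1 h2
        rcases Nat.lt_or_ge i2 (jof x) with hi2 | hi2
        · rw [hYo (2*i1) (by omega) (by omega) (by omega),
              hYo (2*i2) (by omega) (by omega) (by omega)]
          exact hcn i1 i2 h1 hi2
        · have hi2' : i2 = jof x := by omega
          rw [hi2', hYp (2*(jof x)) (by omega) (by omega),
              hYo (2*i1) (by omega) (by omega) (by omega)]
          exact hall_lt i1 (by omega)
      · intro i hij
        rcases Nat.lt_or_ge i (jof x) with hi' | hi'
        · rw [hYo (2*i+1) (by omega) (by omega) (by omega),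
              hYo (2*i) (by omega) (by omega) (by omega)]
          exact hdec i hi'
        · have hieq : i = jof x := by omega
          rw [hieq, hYp (2*(jof x)+1) (by omega) (by omega),
              hYp (2*(jof x)) (by omega) (by omega)]
          left; rfl
      · intro m h2j hmd
        rw [hco0, hYo m hmd (by omega) (by omega)]
        exact hpin m (by omega) hmd
    have hwy : wt y = 1 := wt_of_pat hpaty (by omega) (by omega)
    have hjy : jof y = jof x + 1 := jof_eq hpaty (by omega) (by omega)
    have hne_x : y ≠ x := by
      intro heq
      have h2 : co y (2*(jof x)) = co x (2*(jof x)) := by rw [heq]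
      rw [hYp _ (by omega) (by omega), hpin (2*(jof x)) (by omega) (by omega)] at h2
      have h3 : co x 0 < (S.max' hS : ℕ) := by
        have := hall_lt 0 (by omega)
        simpa using this
      omega
    have hne_M : y ≠ (fun _ => S.max' hS) := by
      intro heq
      have h1 : co y 0 = (S.max' hS : ℕ) := by
        rw [co_apply y (by omega : (0:ℕ) < d)]
        exact congrArg Fin.val (congrFun heq _)
      rw [hco0] at h1
      have := hall_lt 0 (by omega)
      simp only [Nat.mul_zero] at this
      omega
    refine ⟨hmem, hwy, hne_x, hne_M, ?_⟩
    -- sig y : removal branch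
    have hnoy : ¬ (CAset S y).Nonempty := by
      rintro ⟨i, hi1, hex⟩
      rw [hjy] at hi1
      rcases Nat.lt_or_ge i (jof x) with hi' | hi'
      · rw [hYo (2*i) (by omega) (by omega) (by omega)] at hex
        exact hno i hi' hex
      · have hieq : i = jof x := by omega
        rw [hieq, hYp (2*(jof x)) (by omega) (by omega)] at hex
        obtain ⟨s, hs1, hs2⟩ := hex
        have := val_le_max hS hs1
        omega
    have hMy : co y (2*(jof y - 1)) = (S.max' hS : ℕ) := by
      rw [hjy]
      simpa using hYp (2*(jof x)) (by omega) (by omega)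
    have hyy : sig S hS y = fun m : Fin d =>
        if (m : ℕ) = 2*(jof y - 1) ∨ (m : ℕ) = 2*(jof y - 1)+1 then y 0 else y m := by
      unfold sig; rw [dif_pos hwy, dif_neg hnoy, if_pos hMy]
    rw [hyy]
    funext m
    rw [hjy]
    have hy0 : y 0 = x 0 := hYother 0 (by simp; omega)
    rcases eq_or_ne (m : ℕ) (2*(jof x)) with hmeq | hmne1
    · rw [if_pos (by simp; omega : (m:ℕ) = 2*(jof x + 1 - 1) ∨ (m:ℕ) = 2*(jof x + 1 - 1)+1)]
      rw [hy0]
      refine Fin.ext ?_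
      have h1 : (x m).val = co x (2*(jof x)) := hxval m _ hmeq
      rw [h1, hpin (2*(jof x)) (by omega) (by omega), co_zero]
    · rcases eq_or_ne (m : ℕ) (2*(jof x)+1) with hmeq2 | hmne2
      · rw [if_pos (by simp; omega : (m:ℕ) = 2*(jof x + 1 - 1) ∨ (m:ℕ) = 2*(jof x + 1 - 1)+1)]
        rw [hy0]
        refine Fin.ext ?_
        have h1 : (x m).val = co x (2*(jof x)+1) := hxval m _ hmeq2
        rw [h1, hpin (2*(jof x)+1) (by omega) (by omega), co_zero]
      · rw [if_neg (by simp; omega : ¬ ((m:ℕ) = 2*(jof x + 1 - 1) ∨ (m:ℕ) = 2*(jof x + 1 - 1)+1))]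
        exact hYother m (by simp [hmne1, hmne2])


lemma sig_of_wt_ne [NeZero d] {S : Finset (Fin n)} (hS : S.Nonempty) {x : Fin d → Fin n}
    (h : ¬ wt x = 1) : sig S hS x = x := by unfold sig; rw [dif_neg h]

lemma sig_props [NeZero d] {S : Finset (Fin n)} (hS : S.Nonempty) {x : Fin d → Fin n}
    (hx : ∀ m : Fin d, x m ∈ S) (hw : wt x = 1) (hxne : x ≠ (fun _ => S.max' hS))
    (hE : (ES S).card ≤ d/2) :
    (∀ m, sig S hS x m ∈ S) ∧ wt (sig S hS x) = 1 ∧ sig S hS x ≠ x ∧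
    sig S hS x ≠ (fun _ => S.max' hS) ∧ sig S hS (sig S hS x) = x := by
  by_cases hA : (CAset S x).Nonempty
  · exact sigA hS hx hw hA
  · exact sigB hS hx hw hA hxne hE

lemma parity [NeZero d] (hd : 1 ≤ d/2) {S : Finset (Fin n)} (hS : S.Nonempty)
    (hE : (ES S).card ≤ d/2) :
    ∑ x ∈ Fintype.piFinset (fun _ : Fin d => S), wt x = 1 := by
  set x0 : Fin d → Fin n := fun _ => S.max' hS with hx0def
  have hx0 : x0 ∈ Fintype.piFinset (fun _ : Fin d => S) := by
    rw [Fintype.mem_piFinset]; intro i; exact S.max'_mem hS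
  rw [← Finset.insert_erase hx0, Finset.sum_insert (Finset.notMem_erase _ _)]
  have h2 : ∑ x ∈ (Fintype.piFinset (fun _ : Fin d => S)).erase x0, wt x = 0 := by
    have hprop : ∀ a, a ∈ (Fintype.piFinset (fun _ : Fin d => S)).erase x0 → wt a = 1 →
        (∀ m, sig S hS a m ∈ S) ∧ wt (sig S hS a) = 1 ∧ sig S hS a ≠ a ∧
        sig S hS a ≠ (fun _ => S.max' hS) ∧ sig S hS (sig S hS a) = a := by
      intro a ha h1
      exact sig_props hS (fun m => (Fintype.mem_piFinset.mp (Finset.mem_of_mem_erase ha)) m) h1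
        (Finset.ne_of_mem_erase ha) hE
    refine Finset.sum_involution (fun a _ => sig S hS a) ?_ ?_ ?_ ?_
    · intro a ha
      rcases wt_eq_zero_or_one a with h0 | h1
      · have hne1 : ¬ wt a = 1 := by rw [h0]; decide
        have hsa : sig S hS a = a := sig_of_wt_ne hS hne1
        rw [hsa, h0]; decide
      · rw [h1, (hprop a ha h1).2.1]; decide
    · intro a ha hwa
      have h1 : wt a = 1 := by
        rcases wt_eq_zero_or_one a with h0 | h1
        · exact absurd h0 hwa
        · exact h1
      exact (hprop a ha h1).2.2.1
    · intro a ha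
      rcases wt_eq_zero_or_one a with h0 | h1
      · have hne1 : ¬ wt a = 1 := by rw [h0]; decide
        rw [sig_of_wt_ne hS hne1]; exact ha
      · rw [Finset.mem_erase]
        exact ⟨(hprop a ha h1).2.2.2.1, Fintype.mem_piFinset.mpr (hprop a ha h1).1⟩
    · intro a ha
      rcases wt_eq_zero_or_one a with h0 | h1
      · have hne1 : ¬ wt a = 1 := by rw [h0]; decide
        have hsa : sig S hS a = a := sig_of_wt_ne hS hne1
        rw [hsa, hsa]
      · exact (hprop a ha h1).2.2.2.2
  rw [h2, add_zero, hx0def]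
  exact wt_const hd _

lemma ES_card_le {k : ℕ} (hk : k ≠ 0) (a b : Fin k → Fin n) :
    (ES (Finset.univ.sup fun i => Finset.Icc (a i) (b i))).card ≤ k := by
  set S := Finset.univ.sup fun i => Finset.Icc (a i) (b i) with hSdef
  have hmem : ∀ e ∈ ES S, ∃ i : Fin k, e ∈ Finset.Icc (a i) (b i) := by
    intro e he
    have heS : e ∈ S := (mem_ES_iff.mp he).1
    rw [hSdef, Finset.mem_sup] at heS
    obtain ⟨i, _, hi⟩ := heS
    exact ⟨i, hi⟩
  set F : Fin n → Fin k := fun e =>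
    if h : ∃ i : Fin k, e ∈ Finset.Icc (a i) (b i) then h.choose
    else ⟨0, Nat.pos_of_ne_zero hk⟩ with hFdef
  have hFe : ∀ e ∈ ES S, e ∈ Finset.Icc (a (F e)) (b (F e)) := by
    intro e he
    have h := hmem e he
    simp only [hFdef]
    rw [dif_pos h]
    exact h.choose_spec
  have hinj : Set.InjOn F (ES S) := by
    intro e1 h1 e2 h2 heq
    by_contra hne
    have key : ∀ (u v : Fin n), u ∈ ES S → v ∈ ES S → F u = F v → (u:ℕ) < (v:ℕ) → False := by
      intro u v hu hv hFeq hlt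
      have hu1 := hFe u hu
      have hv1 := hFe v hv
      rw [hFeq] at hu1
      rw [Finset.mem_Icc] at hu1 hv1
      have hzlt : (u:ℕ) + 1 < n := by
        have := v.isLt; omega
      set z : Fin n := ⟨(u:ℕ)+1, hzlt⟩ with hzdef
      have hz : z ∈ Finset.Icc (a (F v)) (b (F v)) := by
        rw [Finset.mem_Icc]
        constructor
        · have := hu1.1
          rw [Fin.le_def] at *
          simp only [hzdef]
          omega
        · have := hv1.2
          rw [Fin.le_def] at *
          simp only [hzdef]
          omega
      have hzS : z ∈ S := by
        rw [hSdef, Finset.mem_sup]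
        exact ⟨F v, Finset.mem_univ _, hz⟩
      exact (mem_ES_iff.mp hu).2 ⟨z, hzS, rfl⟩
    rcases Nat.lt_or_ge (e1:ℕ) (e2:ℕ) with hlt | hge
    · exact key e1 e2 h1 h2 heq hlt
    · have hlt : (e2:ℕ) < (e1:ℕ) := by
        rcases Nat.lt_or_ge (e2:ℕ) (e1:ℕ) with h | h
        · exact h
        · exact absurd (Fin.ext (by omega)) hne
      exact key e2 e1 h2 h1 heq.symm hlt
  have := Finset.card_le_card_of_injOn F (fun e _ => Finset.mem_univ (F e)) hinj
  simpa using this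

lemma sum_symmDiff_wt [NeZero d] (A B : Finset (Fin d → Fin n)) :
    ∑ x ∈ symmDiff A B, wt x = (∑ x ∈ A, wt x) + (∑ x ∈ B, wt x) := by
  classical
  have hA : ∑ x ∈ A, wt x = (∑ x ∈ A \ B, wt x) + (∑ x ∈ A ∩ B, wt x) := by
    rw [← Finset.sum_union (Finset.disjoint_sdiff_inter A B), Finset.sdiff_union_inter]
  have hB0 : ∑ x ∈ B, wt x = (∑ x ∈ B \ A, wt x) + (∑ x ∈ B ∩ A, wt x) := by
    rw [← Finset.sum_union (Finset.disjoint_sdiff_inter B A), Finset.sdiff_union_inter]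
  have hB : ∑ x ∈ B, wt x = (∑ x ∈ B \ A, wt x) + (∑ x ∈ A ∩ B, wt x) := by
    rw [hB0, Finset.inter_comm]
  have key : ∀ u v w : ZMod 2, (u + w) + (v + w) = u + v := by decide
  rw [symmDiff_def, Finset.sup_eq_union, Finset.sum_union disjoint_sdiff_sdiff, hA, hB]
  exact (key _ _ _).symm


end
end Stmt5

/-- For `n ≥ d ≥ 2` there is a family of half of all subsets of `[n]^d` no two
    members of which have symmetric difference equal to `S^d` with `S` a
    non-empty union of at most `⌊d/2⌋` intervals. -/
theorem stmt_5 (n d : ℕ) (hd : 2 ≤ d) (hdn : d ≤ n) :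
    ∃ 𝒜 : Finset (Finset (Fin d → Fin n)),
      𝒜.card = 2 ^ (n ^ d - 1) ∧
      ∀ A ∈ 𝒜, ∀ B ∈ 𝒜, ∀ S : Finset (Fin n), S.Nonempty →
        (∃ a b : Fin (d / 2) → Fin n,
          S = Finset.univ.sup fun i => Finset.Icc (a i) (b i)) →
        symmDiff A B ≠ Fintype.piFinset fun _ : Fin d => S := by
  haveI : NeZero d := ⟨by omega⟩
  haveI : NeZero n := ⟨by omega⟩
  classical
  refine ⟨Finset.univ.filter (fun A => ∑ x ∈ A, Stmt5.wt x = 0), ?_, ?_⟩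
  · -- cardinality
    set x0 : Fin d → Fin n := fun _ => 0 with hx0
    have hw0 : Stmt5.wt x0 = 1 := Stmt5.wt_const (by omega) 0
    have hflip : ∀ A : Finset (Fin d → Fin n),
        ∑ x ∈ symmDiff A {x0}, Stmt5.wt x = (∑ x ∈ A, Stmt5.wt x) + 1 := by
      intro A
      rw [Stmt5.sum_symmDiff_wt, Finset.sum_singleton, hw0]
    have hzo : ∀ z : ZMod 2, z = 0 ∨ z = 1 := by decide
    have hbij : (Finset.univ.filter
          (fun A : Finset (Fin d → Fin n) => ∑ x ∈ A, Stmt5.wt x = 0)).card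
        = (Finset.univ.filter
          (fun A : Finset (Fin d → Fin n) => ¬ (∑ x ∈ A, Stmt5.wt x = 0))).card := by
      refine Finset.card_bij' (fun A _ => symmDiff A {x0}) (fun A _ => symmDiff A {x0})
        ?_ ?_ ?_ ?_
      · intro A hA
        rw [Finset.mem_filter] at hA ⊢
        refine ⟨Finset.mem_univ _, ?_⟩
        rw [hflip, hA.2]
        decide
      · intro A hA
        rw [Finset.mem_filter] at hA ⊢
        refine ⟨Finset.mem_univ _, ?_⟩
        rw [hflip]
        rcases hzo (∑ x ∈ A, Stmt5.wt x) with h | h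
        · exact absurd h hA.2
        · rw [h]; decide
      · intro A _
        exact symmDiff_symmDiff_cancel_right {x0} A
      · intro A _
        exact symmDiff_symmDiff_cancel_right {x0} A
    have htot := Finset.card_filter_add_card_filter_not
      (s := (Finset.univ : Finset (Finset (Fin d → Fin n))))
      (fun A : Finset (Fin d → Fin n) => ∑ x ∈ A, Stmt5.wt x = 0)
    have hcu : (Finset.univ : Finset (Finset (Fin d → Fin n))).card = 2 ^ (n ^ d) := by
      rw [Finset.card_univ, Fintype.card_finset, Fintype.card_fun, Fintype.card_fin,
        Fintype.card_fin]
    have hpos : 1 ≤ n ^ d := Nat.one_le_pow _ _ (by omega)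
    have hexp : n ^ d = (n ^ d - 1) + 1 := by omega
    rw [hcu, hbij] at htot
    rw [hexp, pow_succ] at htot
    omega
  · rintro A hA B hB S hS ⟨a, b, rfl⟩ hcontra
    rw [Finset.mem_filter] at hA hB
    have h1 : ∑ x ∈ symmDiff A B, Stmt5.wt x = 0 := by
      rw [Stmt5.sum_symmDiff_wt, hA.2, hB.2]
      decide
    rw [hcontra] at h1
    have h2 : ∑ x ∈ (Fintype.piFinset fun _ : Fin d =>
          (Finset.univ.sup fun i => Finset.Icc (a i) (b i))), Stmt5.wt x = 1 :=
      Stmt5.parity (by omega) hS (Stmt5.ES_card_le (by omega) a b)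
    rw [h1] at h2
    exact absurd h2 (by decide)
end

section
/- For positive integers k and n with 2k ≤ n, the number of non-empty subsets of [n] that are unions of at most k intervals equals C(n+1,2) + C(n+1,4) + ... + C(n+1,2k), which equals C(n,1) + C(n,2) + ... + C(n,2k). -/
/-!
Encode `S ⊆ [n]` by its boundary `∂S = S ∆ (S + 1) ⊆ {0, …, n}`, the positions where membership
in `S` changes. Since `∂` is additive for `∆` and `∂S ≠ ∅` for `S ≠ ∅` (the least element of `S`
is a cut point), `∂` is injective, so it maps the `2 ^ n` subsets of `[n]` bijectively onto the
`2 ^ n` even subsets of `{0, …, n}`. Every maximal run of `S` contributes exactly two cut points,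
its start and one past its end, so `S` is a union of at most `k` intervals iff `|∂S| ≤ 2k`, and
counting even sets of sizes `2, 4, …, 2k` gives `∑ C(n+1, 2j)`. The second identity is Pascal's
rule `C(n+1, 2j) = C(n, 2j-1) + C(n, 2j)`.
-/

/-- `S` is a union of at most `j` intervals in `[n] = Fin n`. -/
def IsUnionOfIntervals (n j : ℕ) (S : Finset (Fin n)) : Prop :=
  ∃ a b : Fin j → Fin n, S = Finset.univ.sup fun i => Finset.Icc (a i) (b i)

open Finset
open scoped symmDiff

theorem Finset.exists_fin_image_univ_eq {α : Type*} [DecidableEq α] {s : Finset α} {k : ℕ}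
    (hs : s.Nonempty) (hk : #s ≤ k) : ∃ f : Fin k → α, univ.image f = s := by
  obtain ⟨x₀, hx₀⟩ := hs
  refine ⟨fun i => if h : (i : ℕ) < #s then s.equivFin.symm ⟨i, h⟩ else x₀, ?_⟩
  ext y
  simp only [mem_image, mem_univ, true_and]
  constructor
  · rintro ⟨i, rfl⟩
    split_ifs
    exacts [(s.equivFin.symm _).2, hx₀]
  · intro hy
    refine ⟨⟨s.equivFin ⟨y, hy⟩, by omega⟩, ?_⟩
    simp

theorem Finset.two_mul_card_filter_even_card (α : Type*) [Fintype α] [Nonempty α] :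
    2 * #{T : Finset α | Even #T} = 2 ^ Fintype.card α := by
  classical
  have h_total := card_filter_add_card_filter_not (s := (univ : Finset (Finset α)))
    fun T => Even #T
  have h_alt := sum_powerset_neg_one_pow_card_of_nonempty (univ_nonempty (α := α))
  rw [powerset_univ, ← sum_filter_add_sum_filter_not _ (Even #·)] at h_alt
  have h_even : ∑ T : Finset α with Even #T, (-1 : ℤ) ^ #T = #{T : Finset α | Even #T} := by
    rw [sum_congr rfl fun T hT => (mem_filter.1 hT).2.neg_one_pow]
    simp
  have h_odd : ∑ T : Finset α with ¬Even #T, (-1 : ℤ) ^ #T = -#{T : Finset α | ¬Even #T} := by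
    rw [sum_congr rfl fun T hT => (Nat.not_even_iff_odd.1 (mem_filter.1 hT).2).neg_one_pow]
    simp
  rw [card_univ, Fintype.card_finset] at h_total
  omega

theorem Finset.card_filter_even_card_le_two_mul (β : Type*) [Fintype β] (k : ℕ) :
    #{T : Finset β | Even #T ∧ T.Nonempty ∧ #T ≤ 2 * k} =
      ∑ j ∈ Icc 1 k, (Fintype.card β).choose (2 * j) := by
  classical
  have h_split : ({T : Finset β | Even #T ∧ T.Nonempty ∧ #T ≤ 2 * k} : Finset _) =
      (Icc 1 k).biUnion fun j => powersetCard (2 * j) univ := by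
    ext T
    simp only [mem_filter, mem_univ, true_and, mem_biUnion, mem_Icc, mem_powersetCard,
      subset_univ, ← card_pos]
    constructor
    · rintro ⟨⟨j, hj⟩, hpos, hle⟩
      exact ⟨j, ⟨by omega, by omega⟩, by omega⟩
    · rintro ⟨j, ⟨hj, hjk⟩, hT⟩
      exact ⟨⟨j, by omega⟩, by omega, by omega⟩
  rw [h_split, card_biUnion]
  · simp [card_powersetCard]
  · intro i _ j _ hij
    exact disjoint_left.2 fun T hi hj => hij (by
      rw [mem_powersetCard] at hi hj; omega)

theorem Nat.sum_Icc_choose_succ_two_mul (n k : ℕ) :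
    ∑ j ∈ Icc 1 k, (n + 1).choose (2 * j) = ∑ j ∈ Icc 1 (2 * k), n.choose j := by
  induction k with
  | zero => simp
  | succ k ih =>
    rw [sum_Icc_succ_top (by omega), ih, show 2 * (k + 1) = 2 * k + 1 + 1 by ring,
      sum_Icc_succ_top (by omega), sum_Icc_succ_top (by omega), Nat.choose_succ_succ]
    ring

namespace IsUnionOfIntervals

variable {n k : ℕ} {S : Finset (Fin n)}

def runStarts (S : Finset (Fin n)) : Finset (Fin n) :=
  {x ∈ S | ∀ y ∈ S, (y : ℕ) + 1 ≠ x}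

def boundary (S : Finset (Fin n)) : Finset (Fin (n + 1)) :=
  S.image Fin.castSucc ∆ S.image Fin.succ

theorem runStarts_subset (S : Finset (Fin n)) : runStarts S ⊆ S :=
  filter_subset _ _

theorem exists_runStart_le {x : Fin n} (hx : x ∈ S) :
    ∃ l ∈ runStarts S, l ≤ x ∧ Icc l x ⊆ S := by
  obtain ⟨l, hl, hl_min⟩ := exists_min_image {z : Fin n | Icc z x ⊆ S} id
    ⟨x, by simpa using hx⟩
  simp only [mem_filter, mem_univ, true_and, id] at hl hl_min
  have hlx : l ≤ x := hl_min x (by simpa using hx)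
  refine ⟨l, mem_filter.2 ⟨hl (left_mem_Icc.2 hlx), fun y hy hyl => ?_⟩, hlx, hl⟩
  have hy_run : Icc y x ⊆ S := fun z hz => by
    rcases eq_or_ne z y with rfl | hzy
    · exact hy
    · have := Fin.val_ne_iff.2 hzy
      simp only [mem_Icc, Fin.le_def] at hz ⊢
      exact hl (mem_Icc.2 ⟨Fin.le_def.2 (by omega), Fin.le_def.2 hz.2⟩)
  exact absurd (hl_min y hy_run) (by rw [not_le, Fin.lt_def]; omega)

theorem runStarts_nonempty (hS : S.Nonempty) : (runStarts S).Nonempty :=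
  let ⟨_, hx⟩ := hS
  let ⟨l, hl, _⟩ := exists_runStart_le hx
  ⟨l, hl⟩

theorem exists_maximal_run {l : Fin n} (hl : l ∈ S) :
    ∃ r, Icc l r ⊆ S ∧ ∀ x, Icc l x ⊆ S → x ≤ r := by
  obtain ⟨r, hr, hr_max⟩ := exists_max_image {z : Fin n | Icc l z ⊆ S} id
    ⟨l, by simpa using hl⟩
  simp only [mem_filter, mem_univ, true_and, id] at hr hr_max
  exact ⟨r, hr, hr_max⟩

theorem card_runStarts_le (h : IsUnionOfIntervals n k S) : #(runStarts S) ≤ k := by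
  obtain ⟨a, b, rfl⟩ := h
  calc #(runStarts _) ≤ #(univ.image a) := card_le_card fun x hx => ?_
    _ ≤ k := card_image_le.trans (by simp)
  obtain ⟨hxS, hx_start⟩ := mem_filter.1 hx
  obtain ⟨i, -, hi⟩ := mem_sup.1 hxS
  refine mem_image.2 ⟨i, mem_univ _, le_antisymm (mem_Icc.1 hi).1 (not_lt.1 fun hlt => ?_)⟩
  rw [mem_Icc, Fin.le_def, Fin.le_def] at hi
  rw [Fin.lt_def] at hlt
  refine hx_start ⟨x - 1, by omega⟩ (mem_sup.2 ⟨i, mem_univ _, ?_⟩) (by simp; omega)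
  simp only [mem_Icc, Fin.le_def]
  omega

theorem of_card_runStarts_le (hS : S.Nonempty) (hk : #(runStarts S) ≤ k) :
    IsUnionOfIntervals n k S := by
  obtain ⟨a, ha⟩ := exists_fin_image_univ_eq (runStarts_nonempty hS) hk
  have ha_mem : ∀ i, a i ∈ S := fun i =>
    runStarts_subset S (ha ▸ mem_image_of_mem a (mem_univ i))
  choose b hb_sub hb_max using fun i => exists_maximal_run (ha_mem i)
  refine ⟨a, b, le_antisymm (fun x hx => ?_) (Finset.sup_le fun i _ => hb_sub i)⟩
  obtain ⟨l, hl, hlx, hl_sub⟩ := exists_runStart_le hx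
  obtain ⟨i, -, rfl⟩ := mem_image.1 (ha ▸ hl)
  exact mem_sup.2 ⟨i, mem_univ _, mem_Icc.2 ⟨hlx, hb_max i x hl_sub⟩⟩

theorem image_castSucc_sdiff_image_succ (S : Finset (Fin n)) :
    S.image Fin.castSucc \ S.image Fin.succ = (runStarts S).image Fin.castSucc := by
  ext t
  simp only [runStarts, mem_sdiff, mem_image, mem_filter, not_exists, not_and]
  constructor
  · rintro ⟨⟨x, hx, rfl⟩, h⟩
    exact ⟨x, ⟨hx, fun y hy hyx => h y hy (Fin.ext (by simp [hyx]))⟩, rfl⟩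
  · rintro ⟨x, ⟨hx, h⟩, rfl⟩
    exact ⟨⟨x, hx, rfl⟩, fun y hy hyx => h y hy (by simpa [Fin.ext_iff] using hyx)⟩

theorem card_boundary (S : Finset (Fin n)) : #(boundary S) = 2 * #(runStarts S) := by
  have h_card : #(S.image Fin.castSucc) = #(S.image Fin.succ) := by
    rw [card_image_of_injective _ (Fin.castSucc_injective n),
      card_image_of_injective _ (Fin.succ_injective n)]
  rw [boundary, Finset.symmDiff_def, card_union_of_disjoint disjoint_sdiff_sdiff,
    ← card_sdiff_comm h_card, image_castSucc_sdiff_image_succ,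
    card_image_of_injective _ (Fin.castSucc_injective n)]
  ring

theorem boundary_symmDiff (S S' : Finset (Fin n)) :
    boundary (S ∆ S') = boundary S ∆ boundary S' := by
  rw [boundary, boundary, boundary, image_symmDiff _ _ (Fin.castSucc_injective n),
    image_symmDiff _ _ (Fin.succ_injective n), symmDiff_symmDiff_symmDiff_comm]

theorem boundary_nonempty_iff : (boundary S).Nonempty ↔ S.Nonempty := by
  rw [← card_pos, card_boundary, mul_pos_iff_of_pos_left two_pos, card_pos]
  exact ⟨fun h => h.mono (runStarts_subset S), runStarts_nonempty⟩

theorem boundary_injective : Function.Injective (boundary (n := n)) := by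
  intro S S' h
  rw [← symmDiff_eq_empty, ← not_nonempty_iff_eq_empty] at h ⊢
  rwa [← boundary_symmDiff, boundary_nonempty_iff] at h

theorem image_boundary_univ :
    univ.image (boundary (n := n)) = ({T : Finset (Fin (n + 1)) | Even #T} : Finset _) := by
  refine eq_of_subset_of_card_le (fun T hT => ?_) ?_
  · obtain ⟨S, -, rfl⟩ := mem_image.1 hT
    simp [card_boundary]
  · have h_even := two_mul_card_filter_even_card (Fin (n + 1))
    rw [Fintype.card_fin, pow_succ] at h_even
    rw [card_image_of_injective _ boundary_injective, card_univ, Fintype.card_finset,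
      Fintype.card_fin]
    omega

theorem isUnionOfIntervals_iff_card_boundary_le (hS : S.Nonempty) :
    IsUnionOfIntervals n k S ↔ #(boundary S) ≤ 2 * k := by
  rw [card_boundary]
  exact ⟨fun h => by have := card_runStarts_le h; omega,
    fun h => of_card_runStarts_le hS (by omega)⟩

end IsUnionOfIntervals

open IsUnionOfIntervals in
theorem stmt_7_general (n k : ℕ) :
    Nat.card {S : Finset (Fin n) // S.Nonempty ∧ IsUnionOfIntervals n k S} =
        ∑ j ∈ Finset.Icc 1 k, (n + 1).choose (2 * j) ∧
      ∑ j ∈ Finset.Icc 1 k, (n + 1).choose (2 * j) =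
        ∑ j ∈ Finset.Icc 1 (2 * k), n.choose j := by
  classical
  refine ⟨?_, Nat.sum_Icc_choose_succ_two_mul n k⟩
  have h_filter : univ.filter (fun S : Finset (Fin n) => S.Nonempty ∧ IsUnionOfIntervals n k S) =
      univ.filter fun S => (boundary S).Nonempty ∧ #(boundary S) ≤ 2 * k :=
    filter_congr fun S _ => by
      rw [boundary_nonempty_iff]
      exact and_congr_right isUnionOfIntervals_iff_card_boundary_le
  rw [Nat.card_eq_fintype_card, Fintype.card_subtype, h_filter,
    ← card_image_of_injective _ boundary_injective,
    ← filter_image (p := fun T : Finset (Fin (n + 1)) => T.Nonempty ∧ #T ≤ 2 * k),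
    image_boundary_univ, filter_filter, card_filter_even_card_le_two_mul, Fintype.card_fin]

/-- The number of non-empty subsets of `[n]` that are unions of at most `k`
    intervals equals `∑_{j=1}^{k} C(n+1, 2j) = ∑_{j=1}^{2k} C(n, j)`. -/
theorem stmt_7 (n k : ℕ) (hk : 1 ≤ k) (hkn : 2 * k ≤ n) :
    Nat.card {S : Finset (Fin n) // S.Nonempty ∧ IsUnionOfIntervals n k S} =
        ∑ j ∈ Finset.Icc 1 k, (n + 1).choose (2 * j) ∧
      ∑ j ∈ Finset.Icc 1 k, (n + 1).choose (2 * j) =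
        ∑ j ∈ Finset.Icc 1 (2 * k), n.choose j :=
  stmt_7_general n k
end

section
/- Let k, d, n be positive integers with n ≥ d = 2k. Then the family of functions {1_{S^d} : S a non-empty union of at most k intervals in [n]}, viewed as functions [n]^d → 𝔽₂, is linearly independent over 𝔽₂. -/
open Finset

namespace Stmt9Aux

variable {n : ℕ}

/-- 1-based indicator function of `S`, as an `𝔽₂`-valued function on `ℕ`,
zero outside `[1, n]`. -/
def chi (S : Finset (Fin n)) (j : ℕ) : ZMod 2 :=
  if ∃ c : Fin n, c ∈ S ∧ (c : ℕ) + 1 = j then 1 else 0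

/-- discrete derivative of `chi`. -/
def del (S : Finset (Fin n)) (j : ℕ) : ZMod 2 :=
  chi S j + chi S (j - 1)

/-- the boundary set of `S`. -/
def DD (S : Finset (Fin n)) : Finset ℕ :=
  (Finset.Icc 1 n).filter fun j => del S j = 1

lemma two_cases : ∀ x : ZMod 2, x = 0 ∨ x = 1 := by decide

lemma chi_zero_or_one (S : Finset (Fin n)) (j : ℕ) : chi S j = 0 ∨ chi S j = 1 := by
  unfold chi; split <;> simp

lemma del_zero_or_one (S : Finset (Fin n)) (j : ℕ) : del S j = 0 ∨ del S j = 1 := by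
  unfold del
  rcases chi_zero_or_one S j with h1 | h1 <;> rcases chi_zero_or_one S (j - 1) with h2 | h2 <;>
    rw [h1, h2] <;> decide

lemma chi_succ (S : Finset (Fin n)) (c : Fin n) :
    chi S ((c : ℕ) + 1) = if c ∈ S then 1 else 0 := by
  unfold chi
  by_cases hc : c ∈ S
  · rw [if_pos ⟨c, hc, rfl⟩, if_pos hc]
  · rw [if_neg, if_neg hc]
    rintro ⟨c', hc', he⟩
    have : c' = c := Fin.val_injective (by omega)
    exact hc (this ▸ hc')

lemma chi_eq_sum (S : Finset (Fin n)) : ∀ j, chi S j = ∑ l ∈ Finset.Icc 1 j, del S l := by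
  intro j
  induction j with
  | zero =>
    simp only [Finset.Icc_self, show Finset.Icc 1 0 = ∅ by simp, Finset.sum_empty]
    rw [chi, if_neg]; rintro ⟨c, _, hc⟩; omega
  | succ j ih =>
    rw [Finset.sum_Icc_succ_top (by omega), ← ih, del]
    simp only [Nat.add_sub_cancel]
    generalize chi S j = a; generalize chi S (j + 1) = b
    revert a b; decide

lemma mem_DD {S : Finset (Fin n)} {l : ℕ} : l ∈ DD S ↔ (1 ≤ l ∧ l ≤ n) ∧ del S l = 1 := by
  simp [DD, Finset.mem_filter, Finset.mem_Icc]

lemma del_eq_ite {S : Finset (Fin n)} {l : ℕ} (hl : 1 ≤ l ∧ l ≤ n) :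
    del S l = if l ∈ DD S then 1 else 0 := by
  rcases del_zero_or_one S l with h | h
  · rw [h, if_neg]; rw [mem_DD]; rw [h]; rintro ⟨-, h1⟩; exact zero_ne_one h1
  · rw [h, if_pos (mem_DD.2 ⟨hl, h⟩)]

lemma DD_inj {S T : Finset (Fin n)} (h : DD S = DD T) : S = T := by
  have hchi : ∀ j, j ≤ n → chi S j = chi T j := by
    intro j hj
    rw [chi_eq_sum, chi_eq_sum]
    refine Finset.sum_congr rfl fun l hl => ?_
    rw [Finset.mem_Icc] at hl
    rw [del_eq_ite ⟨hl.1, le_trans hl.2 hj⟩, del_eq_ite ⟨hl.1, le_trans hl.2 hj⟩, h]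
  ext c
  have := hchi ((c : ℕ) + 1) (by omega)
  rw [chi_succ, chi_succ] at this
  by_cases hS : c ∈ S <;> by_cases hT : c ∈ T <;>
    simp only [hS, hT, if_true, if_false, if_pos, if_neg] at this ⊢ <;> first
    | trivial
    | exact absurd this one_ne_zero
    | exact absurd this.symm one_ne_zero

lemma DD_nonempty {S : Finset (Fin n)} (hS : S.Nonempty) : (DD S).Nonempty := by
  by_contra h
  rw [Finset.not_nonempty_iff_eq_empty] at h
  obtain ⟨c, hc⟩ := hS
  have h1 : chi S ((c : ℕ) + 1) = 1 := by rw [chi_succ, if_pos hc]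
  have h0 : chi S ((c : ℕ) + 1) = 0 := by
    rw [chi_eq_sum]
    refine Finset.sum_eq_zero fun l hl => ?_
    rw [Finset.mem_Icc] at hl
    rw [del_eq_ite ⟨hl.1, by omega⟩, h]
    simp
  rw [h1] at h0; exact one_ne_zero h0

lemma DD_card_le {k : ℕ} {S : Finset (Fin n)} (a b : Fin k → Fin n)
    (hS : S = Finset.univ.sup fun i => Finset.Icc (a i) (b i)) :
    (DD S).card ≤ 2 * k := by
  have hmemS : ∀ c : Fin n, c ∈ S ↔ ∃ i, a i ≤ c ∧ c ≤ b i := by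
    intro c
    rw [hS, Finset.mem_sup]
    constructor
    · rintro ⟨i, -, hi⟩; rw [Finset.mem_Icc] at hi; exact ⟨i, hi⟩
    · rintro ⟨i, hi⟩; exact ⟨i, Finset.mem_univ i, Finset.mem_Icc.2 hi⟩
  have hsub : DD S ⊆
      (Finset.univ.image fun i => (a i : ℕ) + 1) ∪ (Finset.univ.image fun i => (b i : ℕ) + 2) := by
    intro j hj
    rw [mem_DD] at hj
    obtain ⟨⟨hj1, hjn⟩, hdel⟩ := hj
    rw [del] at hdel
    have hchi : chi S j ≠ chi S (j - 1) := by
      intro h; rw [h] at hdel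
      rcases chi_zero_or_one S (j - 1) with h' | h' <;> rw [h'] at hdel <;> simp at hdel
    rw [Finset.mem_union, Finset.mem_image, Finset.mem_image]
    rcases chi_zero_or_one S j with hcj | hcj
    · -- chi S j = 0, so chi S (j-1) = 1 : "right edge", j = b i + 2
      have hcj1 : chi S (j - 1) = 1 := by
        rcases chi_zero_or_one S (j - 1) with h' | h'
        · exact absurd (hcj.trans h'.symm) hchi
        · exact h'
      have hex : ∃ c : Fin n, c ∈ S ∧ (c : ℕ) + 1 = j - 1 := by
        by_contra hn; rw [chi, if_neg hn] at hcj1; exact zero_ne_one hcj1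
      obtain ⟨c, hcS, hcj'⟩ := hex
      obtain ⟨i, hai, hbi⟩ := (hmemS c).1 hcS
      have hcb : c = b i := by
        by_contra hne
        have hlt : (c : ℕ) < (b i : ℕ) := lt_of_le_of_ne (by exact_mod_cast hbi) fun h =>
          hne (Fin.val_injective h)
        have hc2 : ((⟨(c : ℕ) + 1, by omega⟩ : Fin n) : ℕ) = (c : ℕ) + 1 := rfl
        have : (⟨(c : ℕ) + 1, by omega⟩ : Fin n) ∈ S := by
          rw [hmemS]
          exact ⟨i, by rw [Fin.le_def]; omega, by rw [Fin.le_def]; omega⟩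
        have : chi S j = 1 := by
          rw [chi, if_pos ⟨_, this, by rw [hc2]; omega⟩]
        rw [hcj] at this; exact zero_ne_one this
      right; exact ⟨i, Finset.mem_univ i, by rw [← hcb]; omega⟩
    · -- chi S j = 1 : "left edge", j = a i + 1
      have hex : ∃ c : Fin n, c ∈ S ∧ (c : ℕ) + 1 = j := by
        by_contra hn; rw [chi, if_neg hn] at hcj; exact zero_ne_one hcj
      obtain ⟨c, hcS, hcj'⟩ := hex
      obtain ⟨i, hai, hbi⟩ := (hmemS c).1 hcS
      have hca : c = a i := by
        by_contra hne
        have hlt : (a i : ℕ) < (c : ℕ) := lt_of_le_of_ne (by exact_mod_cast hai) fun h =>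
          hne (Fin.val_injective h.symm)
        have hc2 : ((⟨(c : ℕ) - 1, by omega⟩ : Fin n) : ℕ) = (c : ℕ) - 1 := rfl
        have : (⟨(c : ℕ) - 1, by omega⟩ : Fin n) ∈ S := by
          rw [hmemS]
          refine ⟨i, by rw [Fin.le_def]; rw [Fin.le_def] at hbi; omega,
            by rw [Fin.le_def]; rw [Fin.le_def] at hbi; omega⟩
        have : chi S (j - 1) = 1 := by
          rw [chi, if_pos ⟨_, this, by rw [hc2]; omega⟩]
        exact hchi (hcj.trans this.symm)
      left; exact ⟨i, Finset.mem_univ i, by omega⟩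
  calc (DD S).card ≤ _ := Finset.card_le_card hsub
    _ ≤ (Finset.univ.image fun i : Fin k => (a i : ℕ) + 1).card
        + (Finset.univ.image fun i : Fin k => (b i : ℕ) + 2).card := Finset.card_union_le _ _
    _ ≤ k + k := by
        gcongr <;> exact le_trans (Finset.card_image_le) (by simp)
    _ = 2 * k := by ring

end Stmt9Aux

open Stmt9Aux in
/-- For `n ≥ d = 2k`, the family `{1_{S^d}}`, where `S` ranges over non-empty
    unions of at most `k` intervals in `[n]`, is linearly independent over `𝔽₂`. -/
theorem stmt_9 (n d k : ℕ) (hk : 1 ≤ k) (hd : d = 2 * k) (hdn : d ≤ n) :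
    LinearIndependent (ZMod 2)
      (fun S : {S : Finset (Fin n) // S.Nonempty ∧
          ∃ a b : Fin k → Fin n,
            S = Finset.univ.sup fun i => Finset.Icc (a i) (b i)} =>
        (fun x : Fin d → Fin n =>
          if ∀ i, x i ∈ S.1 then (1 : ZMod 2) else 0)) := by
  classical
  rw [linearIndependent_iff']
  intro s g hsum i0 hi0
  by_contra hgi
  set s' := s.filter (fun i => g i ≠ 0) with hs'
  have hi0' : i0 ∈ s' := Finset.mem_filter.2 ⟨hi0, hgi⟩
  -- evaluate the dependency at every point
  have Hx : ∀ x : Fin d → Fin n,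
      ∑ T ∈ s', (if ∀ i, x i ∈ T.1 then (1 : ZMod 2) else 0) = 0 := by
    intro x
    have h1 := congrFun hsum x
    rw [Finset.sum_apply] at h1
    simp only [Pi.smul_apply, smul_eq_mul, Pi.zero_apply] at h1
    refine Eq.trans ?_ h1
    rw [hs', Finset.sum_filter]
    refine Finset.sum_congr rfl fun T hT => ?_
    by_cases h : g T = 0
    · rw [if_neg (not_not.2 h), h, zero_mul]
    · rcases two_cases (g T) with h' | h'
      · exact absurd h' h
      · rw [if_pos h, h', one_mul]
  -- rephrase via chi
  have H : ∀ z : Fin d → ℕ, ∑ T ∈ s', ∏ i, chi T.1 (z i) = 0 := by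
    intro z
    by_cases h : ∀ i, ∃ c : Fin n, (c : ℕ) + 1 = z i
    · choose x hx using h
      rw [← Hx x]
      refine Finset.sum_congr rfl fun T _ => ?_
      have hprod : ∀ i, chi T.1 (z i) = if x i ∈ T.1 then 1 else 0 := by
        intro i; rw [← hx i, chi_succ]
      by_cases hall : ∀ i, x i ∈ T.1
      · rw [if_pos hall]
        refine Finset.prod_eq_one fun i _ => ?_
        rw [hprod i, if_pos (hall i)]
      · rw [if_neg hall]
        push_neg at hall
        obtain ⟨i, hi⟩ := hall
        exact Finset.prod_eq_zero (Finset.mem_univ i) (by rw [hprod i, if_neg hi])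
    · push_neg at h
      obtain ⟨i, hi⟩ := h
      refine Finset.sum_eq_zero fun T _ => ?_
      refine Finset.prod_eq_zero (Finset.mem_univ i) ?_
      rw [chi, if_neg]
      rintro ⟨c, -, hc⟩
      exact hi c hc
  -- rephrase via del
  have G : ∀ y : Fin d → ℕ, ∑ T ∈ s', ∏ i, del T.1 (y i) = 0 := by
    intro y
    have hexp : ∑ T ∈ s', ∏ i, del T.1 (y i)
        = ∑ T ∈ s', ∑ t ∈ (Finset.univ : Finset (Fin d)).powerset,
            (∏ i ∈ t, chi T.1 (y i)) * ∏ i ∈ Finset.univ \ t, chi T.1 (y i - 1) := by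
      refine Finset.sum_congr rfl fun T _ => ?_
      rw [show (∏ i, del T.1 (y i)) = ∏ i, (chi T.1 (y i) + chi T.1 (y i - 1)) from rfl,
        Finset.prod_add]
    rw [hexp, Finset.sum_comm]
    refine Finset.sum_eq_zero fun t _ => ?_
    have hz := H (fun i => if i ∈ t then y i else y i - 1)
    rw [← hz]
    refine Finset.sum_congr rfl fun T _ => ?_
    rw [← Finset.prod_sdiff (Finset.subset_univ t)
      (f := fun i => chi T.1 (if i ∈ t then y i else y i - 1)),
      mul_comm (∏ i ∈ t, chi T.1 (y i)) (∏ i ∈ Finset.univ \ t, chi T.1 (y i - 1))]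
    congr 1
    · exact Finset.prod_congr rfl fun i hi => by rw [if_neg (Finset.mem_sdiff.1 hi).2]
    · exact Finset.prod_congr rfl fun i hi => by rw [if_pos hi]
  -- pick a maximal boundary set
  obtain ⟨S, hSs, hSmax⟩ := Finset.exists_max_image s' (fun T => (DD T.1).card) ⟨i0, hi0'⟩
  have hm1 : 1 ≤ (DD S.1).card := Finset.card_pos.2 (DD_nonempty S.2.1)
  have hmd : (DD S.1).card ≤ d := by
    obtain ⟨a, b, hab⟩ := S.2.2
    rw [hd]; exact DD_card_le a b hab
  let e := (DD S.1).orderEmbOfFin rfl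
  let y : Fin d → ℕ := fun i => e ⟨min i ((DD S.1).card - 1), by omega⟩
  have hymem : ∀ i, y i ∈ DD S.1 := fun i => Finset.orderEmbOfFin_mem _ _ _
  have hcover : ∀ j ∈ DD S.1, ∃ i : Fin d, y i = j := by
    intro j hj
    have hr : j ∈ Set.range e := by
      rw [show e = (DD S.1).orderEmbOfFin rfl from rfl, Finset.range_orderEmbOfFin]
      exact hj
    obtain ⟨i1, hi1⟩ := hr
    refine ⟨⟨i1, by omega⟩, ?_⟩
    show e ⟨min ((⟨(i1 : ℕ), by omega⟩ : Fin d) : ℕ) ((DD S.1).card - 1), by omega⟩ = j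
    have : (⟨min ((⟨(i1 : ℕ), by omega⟩ : Fin d) : ℕ) ((DD S.1).card - 1), by omega⟩ :
        Fin (DD S.1).card) = i1 := by
      apply Fin.ext
      simp only [Fin.val_mk]
      omega
    rw [this]
    exact hi1
  have hfinal := G y
  rw [Finset.sum_eq_single S ?h0 ?h1] at hfinal
  case h1 => intro h; exact absurd hSs h
  case h0 =>
    intro T hTs hTS
    by_contra hne
    have hall : ∀ i, del T.1 (y i) = 1 := by
      intro i
      rcases del_zero_or_one T.1 (y i) with h | h
      · exact absurd (Finset.prod_eq_zero (Finset.mem_univ i) h) hne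
      · exact h
    have hsub : DD S.1 ⊆ DD T.1 := by
      intro j hj
      obtain ⟨i, hi⟩ := hcover j hj
      rw [mem_DD]
      exact ⟨(mem_DD.1 hj).1, hi ▸ hall i⟩
    have hcard : (DD T.1).card ≤ (DD S.1).card := hSmax T hTs
    have heq : DD S.1 = DD T.1 := Finset.eq_of_subset_of_card_le hsub hcard
    exact hTS (Subtype.ext (DD_inj heq.symm))
  · have hone : (∏ i, del S.1 (y i)) = 1 :=
      Finset.prod_eq_one fun i _ => (mem_DD.1 (hymem i)).2
    rw [hone] at hfinal
    exact one_ne_zero hfinal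
end

section
/- Let k, d, n be positive integers with n ≥ d = 2k. For every T ⊆ [n] with 1 ≤ |T| ≤ d, the indicator function of V(T) = {x ∈ [n]^d : {x₁,...,x_d} = T} lies in the 𝔽₂-span of the functions 1_{S^d} where S ranges over non-empty subsets of [n] that are unions of at most k intervals. -/
open Finset

namespace Stmt11Aux

/-- Every order-convex finset of `Fin n` (with `n ≥ 2`) is an `Icc`. -/
lemma convex_icc {n : ℕ} (hn : 2 ≤ n) (C : Finset (Fin n))
    (hC : ∀ x y z : Fin n, x ∈ C → z ∈ C → x ≤ y → y ≤ z → y ∈ C) :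
    ∃ a b : Fin n, C = Finset.Icc a b := by
  rcases C.eq_empty_or_nonempty with h | h
  · refine ⟨⟨1, by omega⟩, ⟨0, by omega⟩, ?_⟩
    rw [h, eq_comm]
    apply Finset.Icc_eq_empty
    simp [Fin.le_def]
  · refine ⟨C.min' h, C.max' h, ?_⟩
    ext y
    constructor
    · intro hy
      exact Finset.mem_Icc.2 ⟨C.min'_le y hy, C.le_max' y hy⟩
    · intro hy
      obtain ⟨h1, h2⟩ := Finset.mem_Icc.1 hy
      exact hC _ y _ (C.min'_mem h) (C.max'_mem h) h1 h2

/-- Parity of the number of supersets of `B` inside `T`. -/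
lemma sum_indicator_subsets {α : Type*} [DecidableEq α] (T B : Finset α) (hB : B ⊆ T) :
    (∑ S ∈ T.powerset, if B ⊆ S then (1 : ZMod 2) else 0) = if B = T then 1 else 0 := by
  rw [Finset.sum_boole]
  have h1 : T.powerset.filter (fun S => B ⊆ S) = Finset.Icc B T :=
    (Finset.Icc_eq_filter_powerset B T).symm
  rw [h1, Finset.card_Icc_finset hB]
  rcases eq_or_ne B T with rfl | hne
  · simp
  · have hlt : B.card < T.card := Finset.card_lt_card (lt_of_le_of_ne hB hne)
    have h2 : ∃ e, T.card - B.card = e + 1 := ⟨T.card - B.card - 1, by omega⟩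
    obtain ⟨e, he⟩ := h2
    rw [if_neg hne, he]
    push_cast
    rw [pow_succ]
    have : ((2 : ZMod 2)) = 0 := rfl
    rw [this, mul_zero]

/-- The key pointwise identity. -/
lemma key {n : ℕ} (d : ℕ) (T G A : Finset (Fin n)) (hGT : Disjoint G T) (hA : A.card ≤ d) :
    (if A = T then (1 : ZMod 2) else 0)
      = (∑ S ∈ T.powerset, if A ⊆ S ∪ G then (1 : ZMod 2) else 0)
        + ∑ X ∈ G.powerset.filter (fun X => X.Nonempty ∧ T.card + X.card ≤ d),
            (if A = T ∪ X then (1 : ZMod 2) else 0) := by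
  by_cases h1 : T ⊆ A ∧ A ⊆ T ∪ G
  · obtain ⟨hTA, hAG⟩ := h1
    have hsum1 : (∑ S ∈ T.powerset, if A ⊆ S ∪ G then (1 : ZMod 2) else 0)
        = ∑ S ∈ T.powerset, if T ⊆ S then (1 : ZMod 2) else 0 := by
      apply Finset.sum_congr rfl
      intro S hS
      rw [Finset.mem_powerset] at hS
      congr 1
      apply propext
      constructor
      · intro hsub t ht
        rcases Finset.mem_union.1 (hsub (hTA ht)) with h | h
        · exact h
        · exact absurd ht (Finset.disjoint_left.1 hGT h)
      · intro hTS
        have : S = T := Finset.Subset.antisymm hS hTS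
        subst this
        exact hAG
    rw [hsum1, sum_indicator_subsets T T subset_rfl, if_pos rfl]
    rcases eq_or_ne A T with rfl | hne
    · rw [if_pos rfl]
      have : ∀ X ∈ G.powerset.filter (fun X => X.Nonempty ∧ A.card + X.card ≤ d),
          (if A = A ∪ X then (1 : ZMod 2) else 0) = 0 := by
        intro X hX
        rw [Finset.mem_filter, Finset.mem_powerset] at hX
        obtain ⟨hXG, hXne, _⟩ := hX
        rw [if_neg]
        intro hAX
        obtain ⟨x, hx⟩ := hXne
        have hxA : x ∈ A := hAX ▸ (Finset.mem_union_right _ hx)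
        exact Finset.disjoint_left.1 hGT (hXG hx) hxA
      rw [Finset.sum_congr rfl this, Finset.sum_const_zero, add_zero]
    · rw [if_neg hne]
      have hterm : ∀ X ∈ G.powerset.filter (fun X => X.Nonempty ∧ T.card + X.card ≤ d),
          (if A = T ∪ X then (1 : ZMod 2) else 0) = (if X = A \ T then 1 else 0) := by
        intro X hX
        rw [Finset.mem_filter, Finset.mem_powerset] at hX
        obtain ⟨hXG, hXne, _⟩ := hX
        congr 1
        apply propext
        constructor
        · intro hAX
          rw [hAX, Finset.union_sdiff_cancel_left (Finset.disjoint_of_subset_right hXG hGT.symm)]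
        · rintro rfl
          rw [Finset.union_sdiff_of_subset hTA]
      rw [Finset.sum_congr rfl hterm,
        Finset.sum_ite_eq' (G.powerset.filter (fun X => X.Nonempty ∧ T.card + X.card ≤ d))
          (A \ T) (fun _ => (1 : ZMod 2)), if_pos]
      · decide
      · rw [Finset.mem_filter, Finset.mem_powerset]
        refine ⟨?_, ?_, ?_⟩
        · intro a ha
          rw [Finset.mem_sdiff] at ha
          rcases Finset.mem_union.1 (hAG ha.1) with h | h
          · exact absurd h ha.2
          · exact h
        · rw [Finset.sdiff_nonempty]
          intro hsub
          exact hne (Finset.Subset.antisymm hsub hTA)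
        · have : T.card + (A \ T).card = A.card := by
            rw [Finset.card_sdiff_of_subset hTA]
            have := Finset.card_le_card hTA
            omega
          omega
  · have hLHS : (if A = T then (1 : ZMod 2) else 0) = 0 := by
      rw [if_neg]
      rintro rfl
      exact h1 ⟨subset_rfl, Finset.subset_union_left⟩
    have hsum2 : ∀ X ∈ G.powerset.filter (fun X => X.Nonempty ∧ T.card + X.card ≤ d),
        (if A = T ∪ X then (1 : ZMod 2) else 0) = 0 := by
      intro X hX
      rw [Finset.mem_filter, Finset.mem_powerset] at hX
      rw [if_neg]
      rintro rfl
      exact h1 ⟨Finset.subset_union_left, Finset.union_subset_union_right hX.1⟩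
    rw [hLHS, Finset.sum_congr rfl hsum2, Finset.sum_const_zero, add_zero]
    by_cases hAG : A ⊆ T ∪ G
    · have hterm : ∀ S ∈ T.powerset, (if A ⊆ S ∪ G then (1 : ZMod 2) else 0)
          = (if A ∩ T ⊆ S then 1 else 0) := by
        intro S hS
        rw [Finset.mem_powerset] at hS
        congr 1
        apply propext
        constructor
        · intro hsub t ht
          rw [Finset.mem_inter] at ht
          rcases Finset.mem_union.1 (hsub ht.1) with h | h
          · exact h
          · exact absurd ht.2 (Finset.disjoint_left.1 hGT h)
        · intro hsub a ha
          rcases Finset.mem_union.1 (hAG ha) with h | h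
          · exact Finset.mem_union_left _ (hsub (Finset.mem_inter.2 ⟨ha, h⟩))
          · exact Finset.mem_union_right _ h
      rw [Finset.sum_congr rfl hterm,
        sum_indicator_subsets T (A ∩ T) Finset.inter_subset_right, if_neg]
      intro hEq
      apply h1
      refine ⟨?_, hAG⟩
      intro t ht
      rw [← hEq] at ht
      exact (Finset.mem_inter.1 ht).1
    · have hterm : ∀ S ∈ T.powerset, (if A ⊆ S ∪ G then (1 : ZMod 2) else 0) = 0 := by
        intro S hS
        rw [Finset.mem_powerset] at hS
        rw [if_neg]
        intro hsub
        exact hAG (hsub.trans (Finset.union_subset_union_left hS))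
      rw [Finset.sum_congr rfl hterm, Finset.sum_const_zero]


lemma exists_G {n k : ℕ} (hn : 2 ≤ n) (hk : 1 ≤ k) (T : Finset (Fin n)) (hT : T.card ≤ 2 * k) :
    ∃ G : Finset (Fin n), Disjoint G T ∧
      ∀ S ⊆ T, ∃ a b : Fin k → Fin n,
        S ∪ G = Finset.univ.sup fun i => Finset.Icc (a i) (b i) := by
  classical
  have e := T.orderIsoOfFin rfl
  set t : ℕ → Fin n := fun j => if h : j < T.card then (e ⟨j, h⟩ : Fin n) else ⟨0, by omega⟩
    with htdef
  have tlt : ∀ i j, i < j → j < T.card → t i < t j := by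
    intro i j hij hj
    have hi : i < T.card := hij.trans hj
    simp only [t, dif_pos hi, dif_pos hj]
    exact Subtype.coe_lt_coe.2 (e.lt_iff_lt.2 (by exact hij))
  have tlt' : ∀ i j, i < T.card → j < T.card → t i < t j → i < j := by
    intro i j hi hj h
    simp only [t, dif_pos hi, dif_pos hj] at h
    exact e.lt_iff_lt.1 (Subtype.coe_lt_coe.1 h)
  have tsurj : ∀ x, x ∈ T → ∃ j, ∃ hj : j < T.card, t j = x := by
    intro x hx
    refine ⟨(e.symm ⟨x, hx⟩ : Fin T.card), (e.symm ⟨x, hx⟩).2, ?_⟩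
    simp only [t, dif_pos (e.symm ⟨x, hx⟩).2, Fin.eta, e.apply_symm_apply]
  set p := T.card - k with hp
  have hpk : p ≤ k := by omega
  have h2p : 2 * p ≤ T.card := by omega
  set G := (Finset.range p).sup fun i => Finset.Ioo (t (2*i)) (t (2*i+1)) with hG
  have memG : ∀ x, x ∈ G ↔ ∃ i, i < p ∧ t (2*i) < x ∧ x < t (2*i+1) := by
    intro x
    rw [Finset.mem_sup]
    constructor
    · rintro ⟨i, hi, hx⟩
      exact ⟨i, Finset.mem_range.1 hi, Finset.mem_Ioo.1 hx⟩
    · rintro ⟨i, hi, h1, h2⟩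
      exact ⟨i, Finset.mem_range.2 hi, Finset.mem_Ioo.2 ⟨h1, h2⟩⟩
  have hGT : Disjoint G T := by
    rw [Finset.disjoint_left]
    intro x hxG hxT
    obtain ⟨i, hip, h1, h2⟩ := (memG x).1 hxG
    obtain ⟨j, hj, rfl⟩ := tsurj x hxT
    have e1 : 2*i < j := tlt' _ _ (by omega) hj h1
    have e2 : j < 2*i+1 := tlt' _ _ hj (by omega) h2
    omega
  refine ⟨G, hGT, ?_⟩
  intro S hS
  set C : Fin k → Finset (Fin n) := fun i =>
    if (i : ℕ) < p then Finset.Ioo (t (2*(i:ℕ))) (t (2*(i:ℕ)+1)) ∪ S ∩ {t (2*(i:ℕ)), t (2*(i:ℕ)+1)}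
    else if (i : ℕ) + p < T.card then S ∩ {t ((i:ℕ) + p)} else ∅ with hCdef
  have hrep : ∀ i : Fin k, ∃ a b : Fin n, C i = Finset.Icc a b := by
    intro i
    apply convex_icc hn
    intro x y z hx hz hxy hyz
    by_cases hip : (i : ℕ) < p
    · simp only [C, if_pos hip] at hx hz ⊢
      have huv : t (2*(i:ℕ)) < t (2*(i:ℕ)+1) := tlt _ _ (by omega) (by omega)
      have hbound : ∀ w, w ∈ Finset.Ioo (t (2*(i:ℕ))) (t (2*(i:ℕ)+1))
          ∪ S ∩ {t (2*(i:ℕ)), t (2*(i:ℕ)+1)} → t (2*(i:ℕ)) ≤ w ∧ w ≤ t (2*(i:ℕ)+1) := by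
        intro w hw
        rcases Finset.mem_union.1 hw with h | h
        · have := Finset.mem_Ioo.1 h
          exact ⟨le_of_lt this.1, le_of_lt this.2⟩
        · have h2 := (Finset.mem_inter.1 h).2
          rcases Finset.mem_insert.1 h2 with rfl | h'
          · exact ⟨le_refl _, le_of_lt huv⟩
          · rw [Finset.mem_singleton] at h'
            subst h'
            exact ⟨le_of_lt huv, le_refl _⟩
      rcases eq_or_ne y (t (2*(i:ℕ))) with hyu | hyu
      · have h1 := (hbound x hx).1
        have hxeq : x = y := le_antisymm hxy (hyu ▸ h1)
        rw [← hxeq]; exact hx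
      · rcases eq_or_ne y (t (2*(i:ℕ)+1)) with hyv | hyv
        · have h1 := (hbound z hz).2
          have hzeq : z = y := le_antisymm (hyv ▸ h1) hyz
          rw [← hzeq]; exact hz
        · apply Finset.mem_union_left
          rw [Finset.mem_Ioo]
          constructor
          · exact lt_of_le_of_ne ((hbound x hx).1.trans hxy) (Ne.symm hyu)
          · exact lt_of_le_of_ne (hyz.trans (hbound z hz).2) hyv
    · simp only [C, if_neg hip] at hx hz ⊢
      by_cases him : (i : ℕ) + p < T.card
      · simp only [if_pos him] at hx hz ⊢
        have hx2 := (Finset.mem_inter.1 hx).2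
        have hz2 := (Finset.mem_inter.1 hz).2
        rw [Finset.mem_singleton] at hx2 hz2
        have hxz : x = z := hx2.trans hz2.symm
        have hxy2 : y = x := le_antisymm (hxz ▸ hyz) hxy
        rw [hxy2]; exact hx
      · simp only [if_neg him] at hx
        exact absurd hx (Finset.notMem_empty x)
  have hmain : S ∪ G = Finset.univ.sup C := by
    ext x
    constructor
    · intro hx
      apply Finset.mem_sup.2
      rcases Finset.mem_union.1 hx with hxS | hxG
      · obtain ⟨j, hj, rfl⟩ := tsurj x (hS hxS)
        by_cases hj2 : j < 2*p
        · refine ⟨⟨j/2, by omega⟩, Finset.mem_univ _, ?_⟩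
          simp only [C]
          rw [if_pos (show ((⟨j/2, by omega⟩ : Fin k) : ℕ) < p by show j/2 < p; omega)]
          apply Finset.mem_union_right
          refine Finset.mem_inter.2 ⟨hxS, ?_⟩
          have hcases : j = 2*(j/2) ∨ j = 2*(j/2)+1 := by omega
          rcases hcases with h | h
          · exact Finset.mem_insert.2 (Or.inl (congrArg t h))
          · exact Finset.mem_insert.2 (Or.inr (Finset.mem_singleton.2 (congrArg t h)))
        · refine ⟨⟨j - p, by omega⟩, Finset.mem_univ _, ?_⟩
          simp only [C]
          rw [if_neg (show ¬ ((⟨j - p, by omega⟩ : Fin k) : ℕ) < p by show ¬ j - p < p; omega),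
            if_pos (show ((⟨j - p, by omega⟩ : Fin k) : ℕ) + p < T.card by show j - p + p < T.card; omega)]
          refine Finset.mem_inter.2 ⟨hxS, Finset.mem_singleton.2 (congrArg t ?_)⟩
          show j = j - p + p
          omega
      · obtain ⟨i, hip, h1, h2⟩ := (memG x).1 hxG
        refine ⟨⟨i, by omega⟩, Finset.mem_univ _, ?_⟩
        simp only [C]
        rw [if_pos (show ((⟨i, by omega⟩ : Fin k) : ℕ) < p by show i < p; omega)]
        exact Finset.mem_union_left _ (Finset.mem_Ioo.2 ⟨h1, h2⟩)
    · intro hx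
      apply Finset.mem_union.2
      obtain ⟨i, -, hxi⟩ := Finset.mem_sup.1 hx
      simp only [C] at hxi
      by_cases hip : (i:ℕ) < p
      · rw [if_pos hip] at hxi
        rcases Finset.mem_union.1 hxi with h | h
        · exact Or.inr ((memG x).2 ⟨(i:ℕ), hip, Finset.mem_Ioo.1 h⟩)
        · exact Or.inl (Finset.mem_inter.1 h).1
      · rw [if_neg hip] at hxi
        by_cases him : (i:ℕ) + p < T.card
        · rw [if_pos him] at hxi
          exact Or.inl (Finset.mem_inter.1 hxi).1
        · rw [if_neg him] at hxi
          exact absurd hxi (Finset.notMem_empty x)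
  choose a b hab using hrep
  exact ⟨a, b, by rw [hmain]; exact Finset.sup_congr rfl (fun i _ => hab i)⟩


lemma gmem {n d k : ℕ} (hd : 0 < d) (W : Finset (Fin n))
    (hrep : ∃ a b : Fin k → Fin n, W = Finset.univ.sup fun i => Finset.Icc (a i) (b i)) :
    (fun x : Fin d → Fin n => if ∀ i, x i ∈ W then (1 : ZMod 2) else 0) ∈
      Submodule.span (ZMod 2)
        {f : (Fin d → Fin n) → ZMod 2 | ∃ S : Finset (Fin n), S.Nonempty ∧
          (∃ a b : Fin k → Fin n, S = Finset.univ.sup fun i => Finset.Icc (a i) (b i)) ∧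
          f = fun x => if ∀ i, x i ∈ S then (1 : ZMod 2) else 0} := by
  rcases W.eq_empty_or_nonempty with rfl | hne
  · have hzero : (fun x : Fin d → Fin n =>
        if ∀ i, x i ∈ (∅ : Finset (Fin n)) then (1 : ZMod 2) else 0) = 0 := by
      funext x
      rw [if_neg]
      · rfl
      · intro h
        exact absurd (h ⟨0, hd⟩) (Finset.notMem_empty _)
    rw [hzero]
    exact Submodule.zero_mem _
  · exact Submodule.subset_span ⟨W, hne, hrep, rfl⟩

lemma step {n k : ℕ} (hk : 1 ≤ k) (hn : 2 * k ≤ n) (T : Finset (Fin n)) (hTne : T.Nonempty)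
    (hTcard : T.card ≤ 2 * k)
    (hrec : ∀ X : Finset (Fin n), X.Nonempty → Disjoint X T → T.card + X.card ≤ 2 * k →
      (fun x : Fin (2*k) → Fin n =>
          if Finset.image x Finset.univ = T ∪ X then (1 : ZMod 2) else 0) ∈
        Submodule.span (ZMod 2)
          {f : (Fin (2*k) → Fin n) → ZMod 2 | ∃ S : Finset (Fin n), S.Nonempty ∧
            (∃ a b : Fin k → Fin n, S = Finset.univ.sup fun i => Finset.Icc (a i) (b i)) ∧
            f = fun x => if ∀ i, x i ∈ S then (1 : ZMod 2) else 0}) :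
    (fun x : Fin (2*k) → Fin n =>
        if Finset.image x Finset.univ = T then (1 : ZMod 2) else 0) ∈
      Submodule.span (ZMod 2)
        {f : (Fin (2*k) → Fin n) → ZMod 2 | ∃ S : Finset (Fin n), S.Nonempty ∧
          (∃ a b : Fin k → Fin n, S = Finset.univ.sup fun i => Finset.Icc (a i) (b i)) ∧
          f = fun x => if ∀ i, x i ∈ S then (1 : ZMod 2) else 0} := by
  obtain ⟨G, hGT, hrep⟩ := exists_G (show 2 ≤ n by omega) hk T hTcard
  have hfun : (fun x : Fin (2*k) → Fin n =>
        if Finset.image x Finset.univ = T then (1 : ZMod 2) else 0)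
      = (∑ S ∈ T.powerset, fun x : Fin (2*k) → Fin n =>
            if ∀ i, x i ∈ S ∪ G then (1 : ZMod 2) else 0)
        + ∑ X ∈ G.powerset.filter (fun X => X.Nonempty ∧ T.card + X.card ≤ 2*k),
            fun x : Fin (2*k) → Fin n =>
              if Finset.image x Finset.univ = T ∪ X then (1 : ZMod 2) else 0 := by
    funext x
    have hA : (Finset.image x Finset.univ).card ≤ 2*k :=
      le_trans Finset.card_image_le (by simp)
    have hkey := key (2*k) T G (Finset.image x Finset.univ) hGT hA
    simp only [Pi.add_apply, Finset.sum_apply]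
    rw [hkey]
    congr 1
    apply Finset.sum_congr rfl
    intro S hS
    congr 1
    apply propext
    constructor
    · intro h i
      exact h (Finset.mem_image.2 ⟨i, Finset.mem_univ i, rfl⟩)
    · intro h a ha
      obtain ⟨i, -, rfl⟩ := Finset.mem_image.1 ha
      exact h i
  rw [hfun]
  apply Submodule.add_mem
  · apply Submodule.sum_mem
    intro S hS
    exact gmem (by omega) (S ∪ G) (hrep S (Finset.mem_powerset.1 hS))
  · apply Submodule.sum_mem
    intro X hX
    rw [Finset.mem_filter, Finset.mem_powerset] at hX
    exact hrec X hX.2.1 (Finset.disjoint_of_subset_left hX.1 hGT) hX.2.2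

lemma main {n k : ℕ} (hk : 1 ≤ k) (hn : 2 * k ≤ n) :
    ∀ (j : ℕ) (T : Finset (Fin n)), T.Nonempty → T.card ≤ 2 * k → 2 * k - T.card ≤ j →
    (fun x : Fin (2*k) → Fin n =>
        if Finset.image x Finset.univ = T then (1 : ZMod 2) else 0) ∈
      Submodule.span (ZMod 2)
        {f : (Fin (2*k) → Fin n) → ZMod 2 | ∃ S : Finset (Fin n), S.Nonempty ∧
          (∃ a b : Fin k → Fin n, S = Finset.univ.sup fun i => Finset.Icc (a i) (b i)) ∧
          f = fun x => if ∀ i, x i ∈ S then (1 : ZMod 2) else 0} := by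
  intro j
  induction j with
  | zero =>
    intro T hTne hTcard hj
    apply step hk hn T hTne hTcard
    intro X hXne hXT hcard
    exfalso
    have h1 := Finset.card_pos.2 hXne
    omega
  | succ j ih =>
    intro T hTne hTcard hj
    apply step hk hn T hTne hTcard
    intro X hXne hXT hcard
    have hcardU : (T ∪ X).card = T.card + X.card := Finset.card_union_of_disjoint hXT.symm
    have h1 := Finset.card_pos.2 hXne
    apply ih
    · exact hTne.mono Finset.subset_union_left
    · omega
    · omega

end Stmt11Aux

/-- For `n ≥ d = 2k` and `T ⊆ [n]` with `1 ≤ |T| ≤ d`, the indicator of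
    `V(T) = {x ∈ [n]^d : {x₁,…,x_d} = T}` lies in the `𝔽₂`-span of the
    indicators `1_{S^d}` with `S` a non-empty union of at most `k` intervals. -/
theorem stmt_11 (n d k : ℕ) (hk : 1 ≤ k) (hd : d = 2 * k) (hdn : d ≤ n)
    (T : Finset (Fin n)) (hT1 : 1 ≤ T.card) (hTd : T.card ≤ d) :
    (fun x : Fin d → Fin n =>
        if Finset.image x Finset.univ = T then (1 : ZMod 2) else 0) ∈
      Submodule.span (ZMod 2)
        {f : (Fin d → Fin n) → ZMod 2 | ∃ S : Finset (Fin n), S.Nonempty ∧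
          (∃ a b : Fin k → Fin n,
            S = Finset.univ.sup fun i => Finset.Icc (a i) (b i)) ∧
          f = fun x => if ∀ i, x i ∈ S then (1 : ZMod 2) else 0} := by
  subst hd
  exact Stmt11Aux.main hk hdn (2 * k - T.card) T (Finset.card_pos.1 hT1) hTd le_rfl
end

section
/- Let n ≥ d be positive integers with d even, let a₁ < a₂ < ... < a_d be elements of [n], let J = [a₁,a₂] ∪ [a₃,a₄] ∪ ... ∪ [a_{d-1},a_d], and let L ⊆ [d] and E = {a_l : l ∈ L}. Then, as integer-valued functions on [n]^d, Σ_{ω ∈ {0,1}^L} (-1)^{|ω|} 1_{([a₁+ω₁, a₂-ω₂] ∪ ... ∪ [a_{d-1}+ω_{d-1}, a_d-ω_d])^d} = 1_{V(E,J)}, where {0,1}^L denotes the set of ω ∈ {0,1}^d with ω_i = 0 for i ∉ L, and V(E,J) is the set of x ∈ [n]^d such that every element of E appears among the coordinates of x and every coordinate of x lies in J. -/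
open Finset in
/-- Lemma: for `d = 2m` even, `a₁ < ⋯ < a_d` in `[n]`,
    `J = [a₁,a₂] ∪ ⋯ ∪ [a_{d-1},a_d]`, `L ⊆ [d]` and `E = {a_l : l ∈ L}`,
    we have `Σ_{ω ∈ {0,1}^L} (-1)^{|ω|} 1_{(⋃_t [a_{2t+1}+ω_{2t+1}, a_{2t+2}-ω_{2t+2}])^d}
    = 1_{V(E,J)}` as integer-valued functions on `[n]^d`.
    Here `ω ∈ {0,1}^L` is encoded by its support `w ⊆ L` (0-indexed: `a 0 < ⋯ < a (d-1)`). -/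
theorem stmt_12 (n d m : ℕ) (hd : 0 < d) (hdn : d ≤ n) (hm : d = 2 * m)
    (a : ℕ → ℕ) (ha : ∀ i < d, a i ∈ Finset.Icc 1 n)
    (hmono : ∀ i j, i < j → j < d → a i < a j)
    (L : Finset ℕ) (hL : ∀ i ∈ L, i < d)
    (x : Fin d → ℕ) (hx : ∀ i, x i ∈ Finset.Icc 1 n) :
    ∑ w ∈ L.powerset, ((-1 : ℤ) ^ w.card *
        (if ∀ i : Fin d, x i ∈ (Finset.range m).sup (fun t =>
            Finset.Icc (a (2 * t) + (if 2 * t ∈ w then 1 else 0))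
              (a (2 * t + 1) - (if 2 * t + 1 ∈ w then 1 else 0)))
          then (1 : ℤ) else 0)) =
      (if (∀ l ∈ L, ∃ i : Fin d, x i = a l) ∧
          (∀ i : Fin d, x i ∈ (Finset.range m).sup (fun t =>
            Finset.Icc (a (2 * t)) (a (2 * t + 1))))
        then (1 : ℤ) else 0) := by
  classical
  set S := L.filter (fun l => ∀ i : Fin d, x i ≠ a l) with hSdef
  have haS : ∀ i, i < d → 1 ≤ a i := fun i hi => (Finset.mem_Icc.mp (ha i hi)).1
  have key : ∀ w ⊆ L,
      ((∀ i : Fin d, x i ∈ (Finset.range m).sup (fun t =>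
            Finset.Icc (a (2 * t) + (if 2 * t ∈ w then 1 else 0))
              (a (2 * t + 1) - (if 2 * t + 1 ∈ w then 1 else 0)))) ↔
        ((∀ i : Fin d, x i ∈ (Finset.range m).sup (fun t =>
            Finset.Icc (a (2 * t)) (a (2 * t + 1)))) ∧ w ⊆ S)) := by
    intro w hw
    constructor
    · intro h
      constructor
      · intro i
        obtain ⟨t, ht, hxt⟩ := Finset.mem_sup.mp (h i)
        rw [Finset.mem_Icc] at hxt
        refine Finset.mem_sup.mpr ⟨t, ht, Finset.mem_Icc.mpr ⟨?_, ?_⟩⟩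
        · exact le_trans (Nat.le_add_right _ _) hxt.1
        · exact le_trans hxt.2 (Nat.sub_le _ _)
      · intro l hl
        rw [hSdef, Finset.mem_filter]
        refine ⟨hw hl, fun i hxi => ?_⟩
        obtain ⟨t, ht, hxt⟩ := Finset.mem_sup.mp (h i)
        rw [Finset.mem_Icc] at hxt
        have htm : t < m := Finset.mem_range.mp ht
        have hld : l < d := hL l (hw hl)
        have h2t : 2 * t < d := by omega
        have h2t1 : 2 * t + 1 < d := by omega
        have hlb : a (2 * t) ≤ a l := by
          rcases lt_trichotomy l (2 * t) with hlt | heq | hgt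
          · exact absurd (hmono l (2 * t) hlt h2t) (by
              have := hxt.1
              have := haS (2 * t) h2t
              omega)
          · omega
          · exact le_of_lt (hmono (2 * t) l hgt hld)
        have hub : a l ≤ a (2 * t + 1) := by
          rcases lt_trichotomy l (2 * t + 1) with hlt | heq | hgt
          · exact le_of_lt (hmono l (2 * t + 1) hlt h2t1)
          · omega
          · exact absurd (hmono (2 * t + 1) l hgt hld) (by
              have := hxt.2
              omega)
        -- l must be 2t or 2t+1
        have hcase : l = 2 * t ∨ l = 2 * t + 1 := by
          rcases lt_trichotomy l (2 * t) with hlt | heq | hgt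
          · have := hmono l (2 * t) hlt h2t; omega
          · exact Or.inl heq
          · rcases lt_trichotomy l (2 * t + 1) with h1 | h2 | h3
            · omega
            · exact Or.inr h2
            · have := hmono (2 * t + 1) l h3 hld
              have := hxt.2
              omega
        have ha1 := haS (2 * t + 1) h2t1
        rcases hcase with rfl | rfl
        · rw [if_pos hl] at hxt
          omega
        · have hxt2 := hxt.2
          rw [if_pos hl] at hxt2
          omega
    · rintro ⟨hP, hwS⟩ i
      obtain ⟨t, ht, hxt⟩ := Finset.mem_sup.mp (hP i)
      rw [Finset.mem_Icc] at hxt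
      refine Finset.mem_sup.mpr ⟨t, ht, Finset.mem_Icc.mpr ⟨?_, ?_⟩⟩
      · split_ifs with h1
        · have := (Finset.mem_filter.mp (hwS h1)).2 i
          omega
        · omega
      · split_ifs with h1
        · have := (Finset.mem_filter.mp (hwS h1)).2 i
          omega
        · omega
  by_cases hP : ∀ i : Fin d, x i ∈ (Finset.range m).sup (fun t =>
      Finset.Icc (a (2 * t)) (a (2 * t + 1)))
  · have hSL : S ⊆ L := Finset.filter_subset _ _
    have step : ∑ w ∈ L.powerset, ((-1 : ℤ) ^ w.card *
        (if ∀ i : Fin d, x i ∈ (Finset.range m).sup (fun t =>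
            Finset.Icc (a (2 * t) + (if 2 * t ∈ w then 1 else 0))
              (a (2 * t + 1) - (if 2 * t + 1 ∈ w then 1 else 0)))
          then (1 : ℤ) else 0)) = ∑ w ∈ S.powerset, (-1 : ℤ) ^ w.card := by
      rw [← Finset.sum_subset (Finset.powerset_mono.mpr hSL)]
      · refine Finset.sum_congr rfl fun w hw => ?_
        have hwS := Finset.mem_powerset.mp hw
        rw [if_pos ((key w (hwS.trans hSL)).mpr ⟨hP, hwS⟩), mul_one]
      · intro w hw hws
        have hwL := Finset.mem_powerset.mp hw
        rw [if_neg, mul_zero]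
        intro hcond
        exact hws (Finset.mem_powerset.mpr ((key w hwL).mp hcond).2)
    rw [step, Finset.sum_powerset_neg_one_pow_card]
    have hequiv : S = ∅ ↔ ∀ l ∈ L, ∃ i : Fin d, x i = a l := by
      rw [hSdef, Finset.filter_eq_empty_iff]
      push_neg
      rfl
    by_cases hE : ∀ l ∈ L, ∃ i : Fin d, x i = a l
    · rw [if_pos (hequiv.mpr hE), if_pos ⟨hE, hP⟩]
    · rw [if_neg (fun h => hE (hequiv.mp h)), if_neg (fun h => hE h.1)]
  · rw [if_neg (fun h => hP h.2)]
    refine Finset.sum_eq_zero fun w hw => ?_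
    rw [if_neg, mul_zero]
    intro hcond
    exact hP ((key w (Finset.mem_powerset.mp hw)).mp hcond).1
end

section
/- Fix d ≥ 1 and δ > 0, and suppose there exists an integer N such that for all n ≥ N, every family 𝒜 ⊆ 𝒫([n]^d) with |𝒜| ≥ δ·2^{n^d} contains a pair (A,B) with A Δ B = S^d for some non-empty S ⊆ [n]. Then for all n ≥ N, every family 𝒜 ⊆ 𝒫([n]^d) with |𝒜| ≥ δ·2^{n^d} contains a pair (A,B) with A Δ B = S^d for some non-empty S ⊆ [n] of size at most N. -/
/-- If for all `n ≥ N` every family of at least `δ·2^{n^d}` subsets of `[n]^d`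
    contains a pair with symmetric difference a power `S^d`, `S ≠ ∅`, then for
    all `n ≥ N` such a pair can be found with `|S| ≤ N`. -/
theorem stmt_18 (d : ℕ) (hd : 1 ≤ d) (δ : ℝ) (hδ : 0 < δ) (N : ℕ)
    (hN : ∀ n, N ≤ n → ∀ 𝒜 : Finset (Finset (Fin d → Fin n)),
      δ * 2 ^ (n ^ d) ≤ (𝒜.card : ℝ) →
      ∃ A ∈ 𝒜, ∃ B ∈ 𝒜, ∃ S : Finset (Fin n), S.Nonempty ∧
        symmDiff A B = Fintype.piFinset fun _ : Fin d => S) :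
    ∀ n, N ≤ n → ∀ 𝒜 : Finset (Finset (Fin d → Fin n)),
      δ * 2 ^ (n ^ d) ≤ (𝒜.card : ℝ) →
      ∃ A ∈ 𝒜, ∃ B ∈ 𝒜, ∃ S : Finset (Fin n), S.Nonempty ∧ S.card ≤ N ∧
        symmDiff A B = Fintype.piFinset fun _ : Fin d => S := by
  intro n hn 𝒜 hcard
  classical
  -- the embedding of the subcube
  set e : (Fin d → Fin N) → (Fin d → Fin n) := fun f j => Fin.castLE hn (f j) with he
  have einj : Function.Injective e := by
    intro f g hfg
    funext j
    exact Fin.castLE_injective hn (congrFun hfg j)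
  set P : (Fin d → Fin n) → Prop := fun f => ∀ j, (f j : ℕ) < N with hP
  set inner : Finset (Fin d → Fin n) → Finset (Fin d → Fin N) :=
    fun A => Finset.univ.filter (fun g => e g ∈ A) with hinner
  set outer : Finset (Fin d → Fin n) → Finset (Fin d → Fin n) :=
    fun A => A.filter (fun f => ¬ P f) with houter
  -- membership lemmas
  have mem_inner : ∀ (A : Finset (Fin d → Fin n)) (g : Fin d → Fin N),
      g ∈ inner A ↔ e g ∈ A := by
    intro A g; simp [hinner]
  have mem_outer : ∀ (A : Finset (Fin d → Fin n)) (f : Fin d → Fin n),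
      ¬ P f → (f ∈ outer A ↔ f ∈ A) := by
    intro A f hf; simp [houter, hf]
  -- for f in the cube, write f = e g
  have cube_repr : ∀ f : Fin d → Fin n, P f → ∃ g : Fin d → Fin N, e g = f := by
    intro f hf
    refine ⟨fun j => ⟨(f j : ℕ), hf j⟩, ?_⟩
    funext j; ext; rfl
  -- nonempty family
  have hpos : (0 : ℝ) < δ * 2 ^ (n ^ d) := by positivity
  have h𝒜ne : 𝒜.Nonempty := by
    rw [← Finset.card_pos]
    by_contra h
    push_neg at h
    interval_cases h' : 𝒜.card
    · simp [h'] at hcard; linarith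
  -- the image of outer
  set T : Finset (Finset (Fin d → Fin n)) := 𝒜.image outer with hT
  have hTne : T.Nonempty := h𝒜ne.image _
  obtain ⟨b, hbT, hbmax⟩ := T.exists_max_image
    (fun b => (𝒜.filter (fun A => outer A = b)).card) hTne
  set F : Finset (Finset (Fin d → Fin n)) := 𝒜.filter (fun A => outer A = b) with hF
  -- cardinality bound on T
  set C : Finset (Fin d → Fin n) := Finset.univ.filter (fun f => ¬ P f) with hC
  have cube_card : (Finset.univ.filter P : Finset (Fin d → Fin n)).card = N ^ d := by
    have : (Finset.univ.filter P : Finset (Fin d → Fin n)) = Finset.univ.image e := by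
      ext f
      simp only [Finset.mem_filter, Finset.mem_univ, true_and, Finset.mem_image]
      constructor
      · intro hf; exact cube_repr f hf
      · rintro ⟨g, -, rfl⟩ j
        exact (g j).isLt.trans_le le_rfl
    rw [this, Finset.card_image_of_injective _ einj]
    simp
  have hCcard : C.card = n ^ d - N ^ d := by
    have h1 : (Finset.univ.filter P).card + C.card
        = (Finset.univ : Finset (Fin d → Fin n)).card :=
      Finset.card_filter_add_card_filter_not (p := P)
    rw [cube_card] at h1
    have h2 : (Finset.univ : Finset (Fin d → Fin n)).card = n ^ d := by simp
    omega
  have hTsub : T ⊆ C.powerset := by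
    intro t ht
    rw [hT, Finset.mem_image] at ht
    obtain ⟨A, -, rfl⟩ := ht
    rw [Finset.mem_powerset]
    intro f hf
    rw [houter, Finset.mem_filter] at hf
    simp [hC, hf.2]
  have hTcard : T.card ≤ 2 ^ (n ^ d - N ^ d) := by
    calc T.card ≤ C.powerset.card := Finset.card_le_card hTsub
    _ = 2 ^ C.card := Finset.card_powerset C
    _ = 2 ^ (n ^ d - N ^ d) := by rw [hCcard]
  -- pigeonhole
  have hsum : 𝒜.card ≤ T.card * F.card := by
    have maps : ∀ A ∈ 𝒜, outer A ∈ T := fun A hA => Finset.mem_image_of_mem _ hA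
    calc 𝒜.card = ∑ t ∈ T, (𝒜.filter (fun A => outer A = t)).card :=
          Finset.card_eq_sum_card_fiberwise maps
    _ ≤ ∑ _t ∈ T, F.card := Finset.sum_le_sum (fun t ht => hbmax t ht)
    _ = T.card * F.card := by rw [Finset.sum_const, smul_eq_mul]
  have hNd : N ^ d ≤ n ^ d := Nat.pow_le_pow_left hn d
  have hFbig : δ * 2 ^ (N ^ d) ≤ (F.card : ℝ) := by
    have h2 : (2 : ℝ) ^ (n ^ d) = 2 ^ (N ^ d) * 2 ^ (n ^ d - N ^ d) := by
      rw [← pow_add]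
      congr 1
      omega
    have hchain : δ * 2 ^ (n ^ d) ≤ (2 : ℝ) ^ (n ^ d - N ^ d) * F.card := by
      calc δ * 2 ^ (n ^ d) ≤ (𝒜.card : ℝ) := hcard
      _ ≤ (T.card : ℝ) * F.card := by exact_mod_cast hsum
      _ ≤ (2 : ℝ) ^ (n ^ d - N ^ d) * F.card := by
          apply mul_le_mul_of_nonneg_right _ (Nat.cast_nonneg _)
          exact_mod_cast hTcard
    rw [h2] at hchain
    have hpos2 : (0 : ℝ) < 2 ^ (n ^ d - N ^ d) := by positivity
    nlinarith
  -- the restricted family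
  set 𝒜' : Finset (Finset (Fin d → Fin N)) := F.image inner with h𝒜'
  have innerInj : Set.InjOn inner F := by
    intro A1 hA1 A2 hA2 hinnereq
    simp only [hF, Finset.coe_filter, Set.mem_setOf_eq] at hA1 hA2
    ext f
    by_cases hf : P f
    · obtain ⟨g, rfl⟩ := cube_repr f hf
      rw [← mem_inner, ← mem_inner, hinnereq]
    · rw [← mem_outer A1 f hf, ← mem_outer A2 f hf, hA1.2, hA2.2]
  have h𝒜'card : (𝒜'.card : ℝ) = F.card := by
    rw [h𝒜', Finset.card_image_of_injOn innerInj]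
  obtain ⟨A', hA', B', hB', S, hSne, hSdiff⟩ :=
    hN N le_rfl 𝒜' (by rw [h𝒜'card]; exact hFbig)
  rw [h𝒜', Finset.mem_image] at hA' hB'
  obtain ⟨A, hAF, rfl⟩ := hA'
  obtain ⟨B, hBF, rfl⟩ := hB'
  rw [hF, Finset.mem_filter] at hAF hBF
  -- lift S
  refine ⟨A, hAF.1, B, hBF.1, S.map ⟨Fin.castLE hn, Fin.castLE_injective hn⟩,
    Finset.Nonempty.map hSne, ?_, ?_⟩
  · rw [Finset.card_map]
    calc S.card ≤ Fintype.card (Fin N) := Finset.card_le_univ S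
    _ = N := Fintype.card_fin N
  · ext f
    by_cases hf : P f
    · obtain ⟨g, rfl⟩ := cube_repr f hf
      have hmemA : e g ∈ A ↔ g ∈ inner A := (mem_inner A g).symm
      have hmemB : e g ∈ B ↔ g ∈ inner B := (mem_inner B g).symm
      have hg : e g ∈ symmDiff A B ↔ g ∈ symmDiff (inner A) (inner B) := by
        rw [Finset.mem_symmDiff, Finset.mem_symmDiff, hmemA, hmemB]
      rw [hg, hSdiff]
      simp only [Fintype.mem_piFinset, Finset.mem_map, Function.Embedding.coeFn_mk]
      constructor
      · intro h j
        exact ⟨g j, h j, rfl⟩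
      · intro h j
        obtain ⟨x, hx, hxe⟩ := h j
        have : x = g j := Fin.castLE_injective hn hxe
        rwa [← this]
    · have hAB : (f ∈ A) ↔ (f ∈ B) := by
        rw [← mem_outer A f hf, ← mem_outer B f hf, hAF.2, hBF.2]
      have hnotdiff : f ∉ symmDiff A B := by
        rw [Finset.mem_symmDiff]
        tauto
      simp only [hnotdiff, false_iff]
      intro hmem
      rw [Fintype.mem_piFinset] at hmem
      rw [hP, not_forall] at hf
      obtain ⟨j, hj⟩ := hf
      obtain ⟨x, -, hxe⟩ := Finset.mem_map.mp (hmem j)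
      have : ((f j : ℕ)) < N := by
        rw [← hxe]; exact x.isLt
      omega
end
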